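/- arXiv:1606.07690 — 8 statements merged into one kernel-verified Lean document; each statement's English description precedes it below -/
import Mathlib

section
/- Let K be a convex body in ℝ^n with non-empty interior, let μ be a finite non-negative Borel measure on int K that is equivalent to Lebesgue measure on int K, and let δ ∈ (0, μ(K)^{2/(n+1)}). Let s_δ : S^{n-1} → ℝ be the function uniquely determined by μ(K ∩ {y : y·v ≥ h_K(v) − s_δ(v)}) = δ^{(n+1)/2} for each v ∈ S^{n-1}. Then the weighted floating body equals the Wulff shape of h_K − s_δ, i.e. F^μ_δ K = ⋂_{v ∈ S^{n-1}} {y ∈ ℝ^n : y·v ≤ h_K(v) − s_δ(v)}; in particular F^μ_δ K is non-empty if and only if this Wulff shape is non-empty. -/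
open MeasureTheory Filter
open scoped InnerProductSpace ENNReal Topology

noncomputable section

/-- The closed half-space `{y : ⟪y, v⟫ ≤ c}`. -/
def halfLe {n : ℕ} (v : EuclideanSpace ℝ (Fin n)) (c : ℝ) : Set (EuclideanSpace ℝ (Fin n)) :=
  {y | ⟪y, v⟫_ℝ ≤ c}

/-- The closed half-space `{y : ⟪y, v⟫ ≥ c}`. -/
def halfGe {n : ℕ} (v : EuclideanSpace ℝ (Fin n)) (c : ℝ) : Set (EuclideanSpace ℝ (Fin n)) :=
  {y | c ≤ ⟪y, v⟫_ℝ}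

/-- The support function `h_K(v) = sup {⟪x, v⟫ : x ∈ K}`. -/
def suppFn {n : ℕ} (K : Set (EuclideanSpace ℝ (Fin n))) (v : EuclideanSpace ℝ (Fin n)) : ℝ :=
  sSup ((fun x => ⟪x, v⟫_ℝ) '' K)

/-- The weighted floating body `F^μ_δ K`: the intersection of all half-spaces `H⁻` whose
complementary half-space `H⁺` cuts off a set of `μ`-measure at most `δ^((n+1)/2)` from `K`. -/
def floatBody {n : ℕ} (μ : Measure (EuclideanSpace ℝ (Fin n)))
    (K : Set (EuclideanSpace ℝ (Fin n))) (δ : ℝ) : Set (EuclideanSpace ℝ (Fin n)) :=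
  ⋂₀ {H | ∃ v c, ‖v‖ = 1 ∧
      μ (K ∩ halfGe v c) ≤ ENNReal.ofReal (δ ^ (((n : ℝ) + 1) / 2)) ∧ H = halfLe v c}

/-!
Every half-space `H⁻ = halfLe v c` in the definition of the floating body contains the one with
the same normal at level `h_K(v) - s_δ(v)`. Indeed, if `c < b := h_K(v) - s_δ(v)`, then since
`0 < δ^((n+1)/2) < μ K` the interior of `K` meets both sides of the hyperplane `⟪·, v⟫ = b`;
being connected, it meets the open slab `c < ⟪·, v⟫ < b`, which therefore has positive Lebesgue
measure and hence positive `μ`-measure, so the cap at level `c` has `μ`-measure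
`> δ^((n+1)/2)`.
-/

open Set

lemma ENNReal.ofReal_rpow_lt_of_lt_rpow_inv {x : ℝ≥0∞} {δ p : ℝ} (hδ : 0 ≤ δ) (hp : 0 < p)
    (h : δ < x.toReal ^ p⁻¹) : ENNReal.ofReal (δ ^ p) < x := by
  have h' : δ ^ p < x.toReal := (Real.lt_rpow_inv_iff_of_pos hδ ENNReal.toReal_nonneg hp).1 h
  exact (ENNReal.ofReal_lt_ofReal_iff'.2 ⟨h', (Real.rpow_nonneg hδ p).trans_lt h'⟩).trans_le
    ENNReal.ofReal_toReal_le

section Superlevel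

variable {E : Type*} [TopologicalSpace E] [MeasurableSpace E] [OpensMeasurableSpace E]
  {μ ν : Measure E} {K U : Set E} {f : E → ℝ}

lemma measure_inter_preimage_Ioo_pos [ν.IsOpenPosMeasure] (hUo : IsOpen U)
    (hUc : IsPreconnected U) (hνμ : ν.restrict U ≪ μ.restrict U) (hf : Continuous f)
    {x y : E} (hx : x ∈ U) (hy : y ∈ U) {a b : ℝ} (hab : a < b) (hxb : f x < b)
    (hby : b ≤ f y) : 0 < μ (U ∩ f ⁻¹' Ioo a b) := by
  have hVo : IsOpen (U ∩ f ⁻¹' Ioo a b) := hUo.inter (isOpen_Ioo.preimage hf)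
  have hlow : max a (f x) < b := max_lt hab hxb
  obtain ⟨z, hzU, hz⟩ : (max a (f x) + b) / 2 ∈ f '' U :=
    hUc.intermediate_value hx hy hf.continuousOn
      ⟨by linarith [le_max_right a (f x)], by linarith⟩
  have hzV : z ∈ U ∩ f ⁻¹' Ioo a b :=
    ⟨hzU, by rw [mem_preimage, hz]; exact ⟨by linarith [le_max_left a (f x)], by linarith⟩⟩
  refine pos_iff_ne_zero.2 fun hμV => (hVo.measure_pos ν ⟨z, hzV⟩).ne' ?_
  have hνV := hνμ (by
    rw [Measure.restrict_apply hVo.measurableSet]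
    exact measure_mono_null inter_subset_left hμV)
  rwa [Measure.restrict_apply hVo.measurableSet,
    inter_eq_self_of_subset_left inter_subset_left] at hνV

lemma measure_inter_preimage_Ici_lt [ν.IsOpenPosMeasure] (hUo : IsOpen U)
    (hUc : IsPreconnected U) (hUK : U ⊆ K) (hμU : μ Uᶜ = 0)
    (hνμ : ν.restrict U ≪ μ.restrict U) (hf : Continuous f) {b c : ℝ} (hcb : c < b)
    (hpos : 0 < μ (K ∩ f ⁻¹' Ici b)) (hlt : μ (K ∩ f ⁻¹' Ici b) < μ K) :
    μ (K ∩ f ⁻¹' Ici b) < μ (K ∩ f ⁻¹' Ici c) := by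
  obtain ⟨y, hyU, -, hby⟩ : (U ∩ (K ∩ f ⁻¹' Ici b)).Nonempty :=
    nonempty_of_measure_ne_zero (by rw [inter_comm, measure_inter_conull hμU]; exact hpos.ne')
  obtain ⟨x, hxU, -, hxb⟩ : (U ∩ (K \ f ⁻¹' Ici b)).Nonempty := by
    refine nonempty_of_measure_ne_zero (μ := μ) fun h0 => hlt.ne ?_
    rw [inter_comm, measure_inter_conull hμU] at h0
    simpa only [h0, add_zero] using
      measure_inter_add_sdiff (μ := μ) K ((measurableSet_Ici (a := b)).preimage hf.measurable)
  have hslab : 0 < μ (U ∩ f ⁻¹' Ioo c b) :=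
    measure_inter_preimage_Ioo_pos hUo hUc hνμ hf hxU hyU hcb (not_le.1 hxb) hby
  have hdisj : Disjoint (K ∩ f ⁻¹' Ici b) (U ∩ f ⁻¹' Ioo c b) :=
    disjoint_left.2 fun z hz hz' => not_le.2 hz'.2.2 hz.2
  calc μ (K ∩ f ⁻¹' Ici b) < μ (K ∩ f ⁻¹' Ici b) + μ (U ∩ f ⁻¹' Ioo c b) :=
        ENNReal.lt_add_right hlt.ne_top hslab.ne'
    _ = μ (K ∩ f ⁻¹' Ici b ∪ U ∩ f ⁻¹' Ioo c b) :=
        (measure_union hdisj (hUo.measurableSet.inter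
          (measurableSet_Ioo.preimage hf.measurable))).symm
    _ ≤ μ (K ∩ f ⁻¹' Ici c) := by
        refine measure_mono (union_subset ?_ ?_)
        · exact inter_subset_inter_right K (preimage_mono (Ici_subset_Ici.2 hcb.le))
        · exact fun z hz => ⟨hUK hz.1, hz.2.1.le⟩

end Superlevel

lemma floatBody_eq_iInter_halfLe {n : ℕ} {μ : Measure (EuclideanSpace ℝ (Fin n))}
    {K : Set (EuclideanSpace ℝ (Fin n))} {δ : ℝ} {g : EuclideanSpace ℝ (Fin n) → ℝ}
    (hg : ∀ v, ‖v‖ = 1 → μ (K ∩ halfGe v (g v)) ≤ ENNReal.ofReal (δ ^ (((n : ℝ) + 1) / 2)))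
    (hmin : ∀ v c, ‖v‖ = 1 →
      μ (K ∩ halfGe v c) ≤ ENNReal.ofReal (δ ^ (((n : ℝ) + 1) / 2)) → g v ≤ c) :
    floatBody μ K δ = ⋂ v ∈ {v : EuclideanSpace ℝ (Fin n) | ‖v‖ = 1}, halfLe v (g v) := by
  refine Subset.antisymm (fun x hx => mem_iInter₂.2 fun v hv => hx _ ⟨v, g v, hv, hg v hv, rfl⟩) ?_
  rintro x hx _ ⟨v, c, hv, hc, rfl⟩
  exact (mem_iInter₂.1 hx v hv).trans (hmin v c hv hc)

theorem stmt1_general {n : ℕ} (K : Set (EuclideanSpace ℝ (Fin n)))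
    (hKconv : Convex ℝ K)
    (μ : Measure (EuclideanSpace ℝ (Fin n)))
    (hμsupp : μ (interior K)ᶜ = 0)
    (hac₂ : volume.restrict (interior K) ≪ μ.restrict (interior K))
    (δ : ℝ) (hδ : δ ∈ Set.Ioo (0 : ℝ) ((μ K).toReal ^ ((2 : ℝ) / (n + 1))))
    (s : EuclideanSpace ℝ (Fin n) → ℝ)
    (hs : ∀ v : EuclideanSpace ℝ (Fin n), ‖v‖ = 1 →
      μ (K ∩ halfGe v (suppFn K v - s v)) = ENNReal.ofReal (δ ^ (((n : ℝ) + 1) / 2))) :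
    floatBody μ K δ =
      ⋂ v ∈ {v : EuclideanSpace ℝ (Fin n) | ‖v‖ = 1}, halfLe v (suppFn K v - s v) ∧
    ((floatBody μ K δ).Nonempty ↔
      (⋂ v ∈ {v : EuclideanSpace ℝ (Fin n) | ‖v‖ = 1},
        halfLe v (suppFn K v - s v)).Nonempty) := by
  have hm_pos : 0 < ENNReal.ofReal (δ ^ (((n : ℝ) + 1) / 2)) :=
    ENNReal.ofReal_pos.2 (Real.rpow_pos_of_pos hδ.1 _)
  have hm_lt : ENNReal.ofReal (δ ^ (((n : ℝ) + 1) / 2)) < μ K :=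
    ENNReal.ofReal_rpow_lt_of_lt_rpow_inv hδ.1.le (by positivity) (by rw [inv_div]; exact hδ.2)
  have hmin : ∀ v c, ‖v‖ = 1 →
      μ (K ∩ halfGe v c) ≤ ENNReal.ofReal (δ ^ (((n : ℝ) + 1) / 2)) → suppFn K v - s v ≤ c := by
    intro v c hv hc
    by_contra! hcb
    rw [← hs v hv] at hc hm_pos hm_lt
    exact hc.not_gt <| measure_inter_preimage_Ici_lt isOpen_interior
      hKconv.interior.isPreconnected interior_subset hμsupp hac₂
      (continuous_id.inner continuous_const) hcb hm_pos hm_lt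
  have heq := floatBody_eq_iInter_halfLe (fun v hv => (hs v hv).le) hmin
  exact ⟨heq, by rw [heq]⟩

/-- The weighted floating body is the Wulff shape of `h_K - s_δ`. -/
theorem stmt1 {n : ℕ} (K : Set (EuclideanSpace ℝ (Fin n)))
    (hKcomp : IsCompact K) (hKconv : Convex ℝ K) (hKint : (interior K).Nonempty)
    (μ : Measure (EuclideanSpace ℝ (Fin n))) [IsFiniteMeasure μ]
    (hμsupp : μ (interior K)ᶜ = 0)
    (hac₁ : μ.restrict (interior K) ≪ volume.restrict (interior K))
    (hac₂ : volume.restrict (interior K) ≪ μ.restrict (interior K))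
    (δ : ℝ) (hδ : δ ∈ Set.Ioo (0 : ℝ) ((μ K).toReal ^ ((2 : ℝ) / (n + 1))))
    (s : EuclideanSpace ℝ (Fin n) → ℝ)
    (hs : ∀ v : EuclideanSpace ℝ (Fin n), ‖v‖ = 1 →
      μ (K ∩ halfGe v (suppFn K v - s v)) = ENNReal.ofReal (δ ^ (((n : ℝ) + 1) / 2))) :
    floatBody μ K δ =
      ⋂ v ∈ {v : EuclideanSpace ℝ (Fin n) | ‖v‖ = 1}, halfLe v (suppFn K v - s v) ∧
    ((floatBody μ K δ).Nonempty ↔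
      (⋂ v ∈ {v : EuclideanSpace ℝ (Fin n) | ‖v‖ = 1},
        halfLe v (suppFn K v - s v)).Nonempty) :=
  stmt1_general K hKconv μ hμsupp hac₂ δ hδ s hs
end
end

section
/- Let K be a convex body in ℝ^n with non-empty interior and let μ be a finite non-negative Borel measure on int K that is equivalent to Lebesgue measure on int K. Then the weighted floating bodies F^μ_δ K converge to K in the Hausdorff distance as δ → 0⁺; in particular, for all sufficiently small δ > 0 the floating body F^μ_δ K is a non-empty convex body contained in K. -/
open MeasureTheory Filter
open scoped InnerProductSpace ENNReal Topology

noncomputable section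

/-!
Let `B(z, r) ⊆ K`. For `y` in the homothetic copy `z + (1 - t)(K - z)`, convexity gives
`B(y, t r) ⊆ K`, so every cap `K ∩ H⁺` with `y ∈ H⁺` contains a ball of radius `t r / 2` lying in
`K`. The centres of such balls form a compact set and `μ` charges every open subset of `int K`,
so their `μ`-measure is bounded below by some `m > 0`. Hence for `δ^((n+1)/2) < m` the copy lies
in `F^μ_δ K`, and it is within Hausdorff distance `t R` of `K` when `K ⊆ B(z, R)`. Conversely, a
point outside `K` is strictly separated from `K` by a hyperplane whose cap is empty, so
`F^μ_δ K ⊆ K`.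
-/

open Metric

section BallMeasure

variable {X : Type*} [PseudoMetricSpace X]

theorem isClosed_setOf_ball_subset (K : Set X) (s : ℝ) : IsClosed {w | ball w s ⊆ K} := by
  have hset : {w | ball w s ⊆ K} = ⋂ p ∈ Kᶜ, {w | s ≤ dist p w} := by
    ext w
    simp only [Set.mem_ofPred_eq, Set.mem_iInter, Set.subset_def, mem_ball, Set.mem_compl_iff]
    exact forall_congr' fun p => by rw [← not_lt]; exact not_imp_not.symm
  rw [hset]
  exact isClosed_biInter fun p _ =>
    isClosed_le continuous_const (continuous_const.dist continuous_id)

variable [MeasurableSpace X]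

theorem exists_pos_le_measure_ball_of_ball_subset (μ : Measure X) {K : Set X} (hK : IsCompact K)
    {s : ℝ} (hs : 0 < s) (hpos : ∀ w, ball w (s / 2) ⊆ K → 0 < μ (ball w (s / 2))) :
    ∃ m > 0, ∀ w, ball w s ⊆ K → m ≤ μ (ball w s) := by
  set C := {w | ball w s ⊆ K}
  have hC : IsCompact C :=
    hK.of_isClosed_subset (isClosed_setOf_ball_subset K s) fun w hw => hw (mem_ball_self hs)
  obtain ⟨T, hTC, hcover⟩ :=
    hC.elim_nhds_subcover (fun w => ball w (s / 2)) fun w _ => ball_mem_nhds w (half_pos hs)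
  refine ⟨T.inf fun w => μ (ball w (s / 2)), ?_, fun w hw => ?_⟩
  · refine (Finset.lt_inf_iff ENNReal.zero_lt_top).2 fun w hw => hpos w ?_
    exact (ball_subset_ball (half_le_self hs.le)).trans (hTC w hw)
  · obtain ⟨w', hw'T, hww'⟩ := Set.mem_iUnion₂.1 (hcover hw)
    refine (Finset.inf_le hw'T).trans (measure_mono (ball_subset_ball' ?_))
    rw [dist_comm]
    linarith [mem_ball.1 hww']

end BallMeasure

theorem measure_pos_of_restrict_absolutelyContinuous {X : Type*} [TopologicalSpace X]
    [MeasurableSpace X] {ν μ : Measure X} [ν.IsOpenPosMeasure] {s U : Set X}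
    (h : ν.restrict s ≪ μ.restrict s) (hU : IsOpen U) (hne : U.Nonempty) (hUs : U ⊆ s) :
    0 < μ U := by
  have hν : ν.restrict s U ≠ 0 := by
    rw [Measure.restrict_eq_self ν hUs]
    exact (hU.measure_pos ν hne).ne'
  exact (pos_iff_ne_zero.2 (mt (@h U) hν)).trans_le (Measure.restrict_apply_le s U)

theorem ball_homothety_subset {E : Type*} [NormedAddCommGroup E] [NormedSpace ℝ E] {K : Set E}
    (hK : Convex ℝ K) {z x : E} {r t : ℝ} (hball : ball z r ⊆ K) (hx : x ∈ K) (ht0 : 0 < t)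
    (ht1 : t ≤ 1) : ball (z + (1 - t) • (x - z)) (t * r) ⊆ K := by
  intro p hp
  have hq : z + t⁻¹ • (p - (z + (1 - t) • (x - z))) ∈ ball z r := by
    rw [mem_ball, dist_eq_norm, add_sub_cancel_left, norm_smul, Real.norm_eq_abs,
      abs_of_pos (inv_pos.2 ht0), inv_mul_lt_iff₀ ht0, ← dist_eq_norm]
    exact hp
  convert hK (hball hq) hx ht0.le (sub_nonneg.2 ht1) (by ring) using 1
  match_scalars <;> field_simp <;> ring

theorem hausdorffDist_le_of_homothety_subset {E : Type*} [NormedAddCommGroup E]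
    [NormedSpace ℝ E] {F K : Set E} {z : E} {t R : ℝ} (ht : 0 ≤ t) (hR : 0 ≤ R)
    (hFK : F ⊆ K) (hKF : ∀ x ∈ K, z + (1 - t) • (x - z) ∈ F) (hKR : K ⊆ closedBall z R) :
    hausdorffDist F K ≤ t * R := by
  refine hausdorffDist_le_of_mem_dist (mul_nonneg ht hR)
    (fun x hx => ⟨x, hFK hx, by rw [dist_self]; positivity⟩) fun x hx => ⟨_, hKF x hx, ?_⟩
  have hxy : x - (z + (1 - t) • (x - z)) = t • (x - z) := by module
  rw [dist_eq_norm, hxy, norm_smul, Real.norm_eq_abs, abs_of_nonneg ht, ← dist_eq_norm]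
  exact mul_le_mul_of_nonneg_left (hKR hx) ht

theorem eventually_ofReal_rpow_lt {p : ℝ} (hp : 0 < p) {m : ℝ≥0∞} (hm : 0 < m) :
    ∀ᶠ δ : ℝ in 𝓝[>] 0, ENNReal.ofReal (δ ^ p) < m := by
  have h : Tendsto (fun δ : ℝ => ENNReal.ofReal (δ ^ p)) (𝓝 0) (𝓝 0) := by
    simpa [Real.zero_rpow hp.ne'] using
      ENNReal.tendsto_ofReal (Real.continuousAt_rpow_const 0 p (Or.inr hp.le)).tendsto
  exact (h.mono_left nhdsWithin_le_nhds).eventually_lt_const hm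

theorem exists_unit_inner_lt_of_notMem {E : Type*} [NormedAddCommGroup E]
    [InnerProductSpace ℝ E] [CompleteSpace E] {K : Set E} (hKc : IsClosed K)
    (hKconv : Convex ℝ K) (hne : K.Nonempty) {x : E} (hx : x ∉ K) :
    ∃ v c, ‖v‖ = 1 ∧ (∀ a ∈ K, ⟪a, v⟫_ℝ < c) ∧ c < ⟪x, v⟫_ℝ := by
  obtain ⟨f, u, hfK, hfx⟩ := geometric_hahn_banach_closed_point hKconv hKc hx
  set w := (InnerProductSpace.toDual ℝ E).symm f
  have hfw : ∀ y, ⟪y, w⟫_ℝ = f y := fun y => by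
    rw [real_inner_comm]; exact InnerProductSpace.toDual_symm_apply
  have hw : 0 < ‖w‖ := by
    obtain ⟨a, ha⟩ := hne
    refine norm_pos_iff.2 fun h0 => ?_
    have h := (hfK a ha).trans hfx
    rw [← hfw, ← hfw, h0, inner_zero_right, inner_zero_right] at h
    exact lt_irrefl 0 h
  have hscale : ∀ y, ⟪y, ‖w‖⁻¹ • w⟫_ℝ = ‖w‖⁻¹ * f y := fun y => by
    rw [real_inner_smul_right, hfw]
  refine ⟨‖w‖⁻¹ • w, ‖w‖⁻¹ * u, ?_, fun a ha => ?_, ?_⟩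
  · rw [norm_smul, norm_inv, norm_norm, inv_mul_cancel₀ hw.ne']
  · rw [hscale]; exact mul_lt_mul_of_pos_left (hfK a ha) (inv_pos.2 hw)
  · rw [hscale]; exact mul_lt_mul_of_pos_left hfx (inv_pos.2 hw)

section FloatBody

variable {n : ℕ}

theorem ball_add_smul_subset_halfGe {v : EuclideanSpace ℝ (Fin n)} (hv : ‖v‖ = 1)
    (y : EuclideanSpace ℝ (Fin n)) (s : ℝ) : ball (y + s • v) s ⊆ halfGe v ⟪y, v⟫_ℝ := by
  intro p hp
  rw [mem_ball, dist_eq_norm] at hp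
  have hinner : ⟪p, v⟫_ℝ = ⟪y, v⟫_ℝ + s + ⟪p - (y + s • v), v⟫_ℝ := by
    rw [inner_sub_left, inner_add_left, real_inner_smul_left, real_inner_self_eq_norm_sq, hv]
    ring
  have hlow := neg_le_of_abs_le (abs_real_inner_le_norm (p - (y + s • v)) v)
  rw [hv, mul_one] at hlow
  show ⟪y, v⟫_ℝ ≤ ⟪p, v⟫_ℝ
  linarith

variable {μ : Measure (EuclideanSpace ℝ (Fin n))} {K : Set (EuclideanSpace ℝ (Fin n))} {δ : ℝ}

theorem mem_floatBody_of_forall {x : EuclideanSpace ℝ (Fin n)}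
    (h : ∀ v c, ‖v‖ = 1 → c < ⟪x, v⟫_ℝ →
      ENNReal.ofReal (δ ^ (((n : ℝ) + 1) / 2)) < μ (K ∩ halfGe v c)) :
    x ∈ floatBody μ K δ := by
  rintro _ ⟨v, c, hv, hcap, rfl⟩
  by_contra hxc
  exact (h v c hv (not_le.1 hxc)).not_ge hcap

theorem isClosed_floatBody : IsClosed (floatBody μ K δ) := by
  refine isClosed_sInter ?_
  rintro _ ⟨v, c, -, -, rfl⟩
  exact isClosed_le (continuous_id.inner continuous_const) continuous_const

theorem convex_floatBody : Convex ℝ (floatBody μ K δ) := by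
  refine convex_sInter ?_
  rintro _ ⟨v, c, -, -, rfl⟩
  exact convex_halfSpace_le
    ⟨fun a b => inner_add_left a b v, fun s a => real_inner_smul_left a v s⟩ c

theorem floatBody_subset (hKc : IsClosed K) (hKconv : Convex ℝ K) (hne : K.Nonempty) :
    floatBody μ K δ ⊆ K := by
  intro x hx
  by_contra hxK
  obtain ⟨v, c, hv, hKv, hcx⟩ := exists_unit_inner_lt_of_notMem hKc hKconv hne hxK
  have hcap : K ∩ halfGe v c = ∅ :=
    Set.eq_empty_of_forall_notMem fun a ⟨ha, hac⟩ => (hKv a ha).not_ge hac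
  have hxc : ⟪x, v⟫_ℝ ≤ c :=
    hx (halfLe v c) ⟨v, c, hv, by rw [hcap, measure_empty]; exact zero_le, rfl⟩
  exact hcx.not_ge hxc

theorem eventually_homothety_subset_floatBody (hKcomp : IsCompact K) (hKconv : Convex ℝ K)
    {z : EuclideanSpace ℝ (Fin n)} {r : ℝ} (hr : 0 < r) (hball : ball z r ⊆ K)
    (hac : volume.restrict (interior K) ≪ μ.restrict (interior K)) {t : ℝ} (ht0 : 0 < t)
    (ht1 : t ≤ 1) :
    ∀ᶠ δ : ℝ in 𝓝[>] 0, ∀ x ∈ K, z + (1 - t) • (x - z) ∈ floatBody μ K δ := by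
  set s := t * r / 2 with hsdef
  have hs : 0 < s := by positivity
  obtain ⟨m, hm, hmball⟩ := exists_pos_le_measure_ball_of_ball_subset μ hKcomp hs fun w hw =>
    measure_pos_of_restrict_absolutelyContinuous hac isOpen_ball
      (nonempty_ball.2 (half_pos hs)) (interior_maximal hw isOpen_ball)
  filter_upwards [eventually_ofReal_rpow_lt (by positivity : (0 : ℝ) < ((n : ℝ) + 1) / 2) hm]
    with δ hδ x hx
  refine mem_floatBody_of_forall fun v c hv hc => hδ.trans_le ?_
  set y := z + (1 - t) • (x - z)
  have hyK : ball (y + s • v) s ⊆ K := by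
    refine (ball_subset_ball' ?_).trans (ball_homothety_subset hKconv hball hx ht0 ht1)
    rw [dist_eq_norm, add_sub_cancel_left, norm_smul, hv, Real.norm_eq_abs, abs_of_pos hs, hsdef]
    linarith
  have hyH : ball (y + s • v) s ⊆ halfGe v c :=
    (ball_add_smul_subset_halfGe hv y s).trans fun p hp => hc.le.trans hp
  exact (hmball _ hyK).trans (measure_mono (Set.subset_inter hyK hyH))

end FloatBody

theorem stmt2_general {n : ℕ} (K : Set (EuclideanSpace ℝ (Fin n)))
    (hKcomp : IsCompact K) (hKconv : Convex ℝ K) (hKint : (interior K).Nonempty)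
    (μ : Measure (EuclideanSpace ℝ (Fin n)))
    (hac₂ : volume.restrict (interior K) ≪ μ.restrict (interior K)) :
    Tendsto (fun δ : ℝ => Metric.hausdorffDist (floatBody μ K δ) K) (𝓝[>] 0) (𝓝 0) ∧
    (∀ᶠ δ : ℝ in 𝓝[>] 0,
      (floatBody μ K δ).Nonempty ∧ IsCompact (floatBody μ K δ) ∧
      Convex ℝ (floatBody μ K δ) ∧ floatBody μ K δ ⊆ K) := by
  obtain ⟨z, hz⟩ := hKint
  obtain ⟨r, hr, hball⟩ := Metric.isOpen_iff.1 isOpen_interior z hz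
  replace hball := hball.trans interior_subset
  have hzK : z ∈ K := hball (mem_ball_self hr)
  obtain ⟨R, hR, hKR⟩ := hKcomp.isBounded.subset_closedBall_lt 0 z
  have hFK : ∀ δ, floatBody μ K δ ⊆ K := fun δ =>
    floatBody_subset hKcomp.isClosed hKconv ⟨z, hzK⟩
  refine ⟨Metric.tendsto_nhds.2 fun ε hε => ?_, ?_⟩
  · set t := min 1 (ε / (2 * R))
    have ht0 : 0 < t := lt_min one_pos (by positivity)
    filter_upwards [eventually_homothety_subset_floatBody hKcomp hKconv hr hball hac₂ ht0
      (min_le_left _ _)] with δ hδ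
    rw [dist_zero_right, Real.norm_of_nonneg hausdorffDist_nonneg]
    calc hausdorffDist (floatBody μ K δ) K ≤ t * R :=
          hausdorffDist_le_of_homothety_subset ht0.le hR.le (hFK δ) hδ hKR
      _ ≤ ε / (2 * R) * R := mul_le_mul_of_nonneg_right (min_le_right _ _) hR.le
      _ < ε := by field_simp; linarith
  · filter_upwards [eventually_homothety_subset_floatBody hKcomp hKconv hr hball hac₂ one_pos
      le_rfl] with δ hδ
    exact ⟨⟨z, by simpa using hδ z hzK⟩, hKcomp.of_isClosed_subset isClosed_floatBody (hFK δ),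
      convex_floatBody, hFK δ⟩

/-- The weighted floating bodies converge to `K` in Hausdorff distance as
`δ → 0⁺`; in particular, for all sufficiently small `δ > 0` the floating body is a non-empty
convex body contained in `K`. -/
theorem stmt2 {n : ℕ} (K : Set (EuclideanSpace ℝ (Fin n)))
    (hKcomp : IsCompact K) (hKconv : Convex ℝ K) (hKint : (interior K).Nonempty)
    (μ : Measure (EuclideanSpace ℝ (Fin n))) [IsFiniteMeasure μ]
    (hμsupp : μ (interior K)ᶜ = 0)
    (hac₁ : μ.restrict (interior K) ≪ volume.restrict (interior K))
    (hac₂ : volume.restrict (interior K) ≪ μ.restrict (interior K)) :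
    Tendsto (fun δ : ℝ => Metric.hausdorffDist (floatBody μ K δ) K) (𝓝[>] 0) (𝓝 0) ∧
    (∀ᶠ δ : ℝ in 𝓝[>] 0,
      (floatBody μ K δ).Nonempty ∧ IsCompact (floatBody μ K δ) ∧
      Convex ℝ (floatBody μ K δ) ∧ floatBody μ K δ ⊆ K) :=
  stmt2_general K hKcomp hKconv hKint μ hac₂
end
end

section
/- Let f_i : S^{n-1} → (0,∞), i ∈ ℕ, be a sequence of positive continuous functions converging uniformly to a positive continuous function f : S^{n-1} → (0,∞). Let x be a regular boundary point of the Wulff shape [f], with unique outer unit normal N_x. Then for every ε > 0 there exists i₀ ∈ ℕ such that for all i > i₀: [f_i] ∩ pos{x} = (⋂{ {y ∈ ℝ^n : y·v ≤ f_i(v)} : v ∈ S^{n-1}, d_s(v, N_x) < ε }) ∩ pos{x}. -/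
open MeasureTheory Filter
open scoped InnerProductSpace ENNReal Topology

noncomputable section

/-- The ray `pos{x} = {t • x : t ≥ 0}`. -/
def ray {n : ℕ} (x : EuclideanSpace ℝ (Fin n)) : Set (EuclideanSpace ℝ (Fin n)) :=
  {y | ∃ t : ℝ, 0 ≤ t ∧ y = t • x}

/-- The spherical distance `d_s(u,v) = arccos ⟪u, v⟫` on the unit sphere. -/
def sphDist {n : ℕ} (u v : EuclideanSpace ℝ (Fin n)) : ℝ := Real.arccos ⟪u, v⟫_ℝ

/-- The Wulff shape `[f] = ⋂_{‖v‖=1} {y : ⟪y, v⟫ ≤ f v}`. -/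
def wulff {n : ℕ} (f : EuclideanSpace ℝ (Fin n) → ℝ) : Set (EuclideanSpace ℝ (Fin n)) :=
  ⋂ v ∈ {v : EuclideanSpace ℝ (Fin n) | ‖v‖ = 1}, halfLe v (f v)

/-!
At a regular boundary point `x` of `[f]` every constraint `⟪y, v⟫ ≤ f v` with `v` at spherical
distance `≥ ε` from `N_x` is slack, and by compactness uniformly so. Since `0` is interior to the
convex body `[f]`, the ray through `x` leaves `[f]` right after `x`, and by the slack it must do
so through a constraint with `v` near `N_x`; so the near constraints alone cut the ray at some
`T • x` at which all far constraints still hold strictly. Both strict inequalities survive a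
uniformly small perturbation of `f`, which pins `[f i] ∩ pos{x}` down to the near constraints.
-/

open Metric

theorem Convex.mem_interior_of_smul_mem {E : Type*} [AddCommGroup E] [Module ℝ E]
    [TopologicalSpace E] [IsTopologicalAddGroup E] [ContinuousConstSMul ℝ E] {s : Set E}
    (hs : Convex ℝ s) (h0 : (0 : E) ∈ interior s) {x : E} {t : ℝ} (ht : 1 < t)
    (htx : t • x ∈ s) : x ∈ interior s := by
  have ht0 : t ≠ 0 := by positivity
  have hmem := hs.add_smul_sub_mem_interior htx h0 (t := 1 - t⁻¹)
    ⟨by simpa using inv_lt_one_of_one_lt₀ ht, by simp [(inv_pos.2 (by positivity : 0 < t)).le]⟩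
  convert hmem using 1
  rw [zero_sub, smul_neg, smul_smul, ← sub_eq_add_neg, ← sub_smul]
  field_simp
  simp

theorem exists_one_lt_sub_mul_inner_le {E : Type*} [NormedAddCommGroup E] [InnerProductSpace ℝ E]
    (x : E) {δ : ℝ} (hδ : 0 < δ) :
    ∃ T > 1, ∀ v : E, ‖v‖ = 1 → (T - 1) * ⟪x, v⟫_ℝ ≤ δ := by
  refine ⟨1 + δ / (‖x‖ + 1), by simp; positivity, fun v hv => ?_⟩
  have hxv : ⟪x, v⟫_ℝ ≤ ‖x‖ := by simpa [hv] using real_inner_le_norm x v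
  calc (1 + δ / (‖x‖ + 1) - 1) * ⟪x, v⟫_ℝ ≤ δ / (‖x‖ + 1) * (‖x‖ + 1) := by
        rw [add_sub_cancel_left]; gcongr; linarith
    _ = δ := by field_simp

variable {n : ℕ}

local notation "𝔼" => EuclideanSpace ℝ (Fin n)

theorem sphDist_self {v : 𝔼} (hv : ‖v‖ = 1) : sphDist v v = 0 := by
  simp [sphDist, hv]

theorem mem_wulff {f : 𝔼 → ℝ} {y : 𝔼} : y ∈ wulff f ↔ ∀ v : 𝔼, ‖v‖ = 1 → ⟪y, v⟫_ℝ ≤ f v := by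
  simp [wulff, halfLe]

theorem isClosed_wulff (f : 𝔼 → ℝ) : IsClosed (wulff f) :=
  isClosed_biInter fun _ _ => isClosed_le (continuous_id.inner continuous_const) continuous_const

theorem convex_wulff (f : 𝔼 → ℝ) : Convex ℝ (wulff f) :=
  convex_iInter₂ fun v _ =>
    convex_halfSpace_le ⟨fun a b => inner_add_left a b v, fun r a => real_inner_smul_left a v r⟩ _

theorem ball_subset_wulff {f : 𝔼 → ℝ} {r : ℝ} (hr : ∀ v : 𝔼, ‖v‖ = 1 → r ≤ f v) :
    ball 0 r ⊆ wulff f := fun y hy =>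
  mem_wulff.2 fun v hv => by
    have hyv : ⟪y, v⟫_ℝ ≤ ‖y‖ := by simpa [hv] using real_inner_le_norm y v
    linarith [mem_ball_zero_iff.1 hy, hr v hv]

theorem zero_mem_interior_wulff {f : 𝔼 → ℝ} (hfc : ContinuousOn f (sphere 0 1))
    (hfpos : ∀ v : 𝔼, ‖v‖ = 1 → 0 < f v) : (0 : 𝔼) ∈ interior (wulff f) := by
  obtain ⟨r, hr, hrf⟩ := (isCompact_sphere (0 : 𝔼) 1).exists_forall_le' hfc
    fun v hv => hfpos v (mem_sphere_zero_iff_norm.1 hv)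
  exact interior_maximal (ball_subset_wulff fun v hv => hrf v (mem_sphere_zero_iff_norm.2 hv))
    isOpen_ball (mem_ball_self hr)

theorem smul_notMem_wulff_of_mem_frontier {f : 𝔼 → ℝ} (hfc : ContinuousOn f (sphere 0 1))
    (hfpos : ∀ v : 𝔼, ‖v‖ = 1 → 0 < f v) {x : 𝔼} (hx : x ∈ frontier (wulff f)) {t : ℝ}
    (ht : 1 < t) : t • x ∉ wulff f := fun htx =>
  hx.2 ((convex_wulff f).mem_interior_of_smul_mem (zero_mem_interior_wulff hfc hfpos) ht htx)

theorem exists_pos_inner_add_le_of_le_sphDist {f : 𝔼 → ℝ}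
    (hfc : ContinuousOn f (sphere 0 1)) {x N : 𝔼} (hx : x ∈ wulff f)
    (hNuniq : ∀ v : 𝔼, ‖v‖ = 1 → (∀ y ∈ wulff f, ⟪y, v⟫_ℝ ≤ ⟪x, v⟫_ℝ) → v = N)
    {ε : ℝ} (hε : 0 < ε) :
    ∃ δ > 0, ∀ v : 𝔼, ‖v‖ = 1 → ε ≤ sphDist v N → ⟪x, v⟫_ℝ + δ ≤ f v := by
  have hfar : IsCompact (sphere (0 : 𝔼) 1 ∩ {v | ε ≤ sphDist v N}) :=
    (isCompact_sphere 0 1).inter_right <| isClosed_le continuous_const <|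
      Real.continuous_arccos.comp (continuous_id.inner continuous_const)
  have hslack : ∀ v ∈ sphere (0 : 𝔼) 1 ∩ {v | ε ≤ sphDist v N}, 0 < f v - ⟪x, v⟫_ℝ := by
    rintro v ⟨hv, hvN⟩
    rw [mem_sphere_zero_iff_norm] at hv
    refine sub_pos.2 ((mem_wulff.1 hx v hv).lt_of_ne fun hxv => ?_)
    have hvN' : v = N := hNuniq v hv fun y hy => hxv ▸ mem_wulff.1 hy v hv
    subst hvN'
    exact hε.not_ge (sphDist_self hv ▸ hvN)
  have hcont : ContinuousOn (fun v => f v - ⟪x, v⟫_ℝ) (sphere 0 1 ∩ {v | ε ≤ sphDist v N}) :=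
    (hfc.mono Set.inter_subset_left).sub (continuous_const.inner continuous_id).continuousOn
  obtain ⟨δ, hδ, hδf⟩ := hfar.exists_forall_le' hcont hslack
  exact ⟨δ, hδ, fun v hv hvN => by
    linarith [hδf v ⟨mem_sphere_zero_iff_norm.2 hv, hvN⟩]⟩

theorem wulff_inter_ray_eq_of_far_le {g : 𝔼 → ℝ} (hg : ∀ v : 𝔼, ‖v‖ = 1 → 0 < g v)
    {U : Set 𝔼} {x vs : 𝔼} {T : ℝ} (hT : 0 ≤ T)
    (hfar : ∀ v : 𝔼, ‖v‖ = 1 → v ∉ U → T * ⟪x, v⟫_ℝ ≤ g v)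
    (hvs : ‖vs‖ = 1) (hvsU : vs ∈ U) (hcut : g vs < T * ⟪x, vs⟫_ℝ) :
    wulff g ∩ ray x = (⋂ v ∈ {v : 𝔼 | ‖v‖ = 1 ∧ v ∈ U}, halfLe v (g v)) ∩ ray x := by
  refine subset_antisymm (Set.inter_subset_inter_left _ fun y hy => ?_) ?_
  · exact Set.mem_iInter₂.2 fun v hv => Set.mem_iInter₂.1 hy v hv.1
  rintro _ ⟨hy, t, ht, rfl⟩
  simp only [Set.mem_iInter₂, halfLe, Set.mem_ofPred_eq, real_inner_smul_left] at hy
  have hxvs : 0 < ⟪x, vs⟫_ℝ := pos_of_mul_pos_right ((hg vs hvs).trans hcut) hT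
  have htT : t ≤ T := le_of_mul_le_mul_right ((hy vs ⟨hvs, hvsU⟩).trans hcut.le) hxvs
  refine ⟨mem_wulff.2 fun v hv => ?_, t, ht, rfl⟩
  rw [real_inner_smul_left]
  by_cases hvU : v ∈ U
  · exact hy v ⟨hv, hvU⟩
  rcases le_or_gt ⟪x, v⟫_ℝ 0 with hxv | hxv
  · exact (mul_nonpos_of_nonneg_of_nonpos ht hxv).trans (hg v hv).le
  · exact (mul_le_mul_of_nonneg_right htT hxv.le).trans (hfar v hv hvU)

theorem stmt3_general {n : ℕ} (f : ℕ → EuclideanSpace ℝ (Fin n) → ℝ)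
    (flim : EuclideanSpace ℝ (Fin n) → ℝ)
    (hfpos : ∀ i, ∀ v : EuclideanSpace ℝ (Fin n), ‖v‖ = 1 → 0 < f i v)
    (hflimc : ContinuousOn flim (Metric.sphere (0 : EuclideanSpace ℝ (Fin n)) 1))
    (hflimpos : ∀ v : EuclideanSpace ℝ (Fin n), ‖v‖ = 1 → 0 < flim v)
    (hunif : TendstoUniformlyOn f flim atTop
      (Metric.sphere (0 : EuclideanSpace ℝ (Fin n)) 1))
    (x N : EuclideanSpace ℝ (Fin n))
    (hx : x ∈ frontier (wulff flim))
    (hNuniq : ∀ v : EuclideanSpace ℝ (Fin n), ‖v‖ = 1 →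
      (∀ y ∈ wulff flim, ⟪y, v⟫_ℝ ≤ ⟪x, v⟫_ℝ) → v = N) :
    ∀ ε > (0 : ℝ), ∃ i₀ : ℕ, ∀ i > i₀,
      wulff (f i) ∩ ray x =
        (⋂ v ∈ {v : EuclideanSpace ℝ (Fin n) | ‖v‖ = 1 ∧ sphDist v N < ε},
          halfLe v (f i v)) ∩ ray x := by
  intro ε hε
  obtain ⟨δ, hδ, hgap⟩ := exists_pos_inner_add_le_of_le_sphDist hflimc
    ((isClosed_wulff flim).frontier_subset hx) hNuniq hε
  obtain ⟨T, hT, hTx⟩ := exists_one_lt_sub_mul_inner_le x (half_pos hδ)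
  have hfar : ∀ v : EuclideanSpace ℝ (Fin n), ‖v‖ = 1 → ¬sphDist v N < ε →
      T * ⟪x, v⟫_ℝ + δ / 2 ≤ flim v := fun v hv hvN => by
    linarith [hgap v hv (not_lt.1 hvN), hTx v hv]
  obtain ⟨vs, hvs, hvsN, hcut⟩ : ∃ v : EuclideanSpace ℝ (Fin n),
      ‖v‖ = 1 ∧ sphDist v N < ε ∧ flim v < T * ⟪x, v⟫_ℝ := by
    have hout := smul_notMem_wulff_of_mem_frontier hflimc hflimpos hx hT
    simp only [mem_wulff, real_inner_smul_left, not_forall, not_le] at hout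
    obtain ⟨v, hv, hlt⟩ := hout
    exact ⟨v, hv, not_not.1 fun hvN => (hfar v hv hvN).not_gt (by linarith), hlt⟩
  set c := min (δ / 2) (T * ⟪x, vs⟫_ℝ - flim vs)
  have hc_far : c ≤ δ / 2 := min_le_left _ _
  have hc_cut : c ≤ T * ⟪x, vs⟫_ℝ - flim vs := min_le_right _ _
  obtain ⟨i₀, hi₀⟩ := eventually_atTop.1 <| Metric.tendstoUniformlyOn_iff.1 hunif c
    (lt_min (half_pos hδ) (sub_pos.2 hcut))
  refine ⟨i₀, fun i hi => ?_⟩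
  have hclose : ∀ v : EuclideanSpace ℝ (Fin n), ‖v‖ = 1 → |flim v - f i v| < c := fun v hv => by
    simpa only [Real.dist_eq] using hi₀ i hi.le v (mem_sphere_zero_iff_norm.2 hv)
  refine wulff_inter_ray_eq_of_far_le (hfpos i) (zero_le_one.trans hT.le)
    (fun v hv hvN => ?_) hvs hvsN ?_
  · linarith [hfar v hv hvN, (abs_sub_lt_iff.1 (hclose v hv)).1]
  · linarith [(abs_sub_lt_iff.1 (hclose vs hvs)).2]

/-- Local dependence of a convergent sequence of Wulff shapes. -/
theorem stmt3 {n : ℕ} (f : ℕ → EuclideanSpace ℝ (Fin n) → ℝ)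
    (flim : EuclideanSpace ℝ (Fin n) → ℝ)
    (hfc : ∀ i, ContinuousOn (f i) (Metric.sphere (0 : EuclideanSpace ℝ (Fin n)) 1))
    (hfpos : ∀ i, ∀ v : EuclideanSpace ℝ (Fin n), ‖v‖ = 1 → 0 < f i v)
    (hflimc : ContinuousOn flim (Metric.sphere (0 : EuclideanSpace ℝ (Fin n)) 1))
    (hflimpos : ∀ v : EuclideanSpace ℝ (Fin n), ‖v‖ = 1 → 0 < flim v)
    (hunif : TendstoUniformlyOn f flim atTop
      (Metric.sphere (0 : EuclideanSpace ℝ (Fin n)) 1))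
    (x N : EuclideanSpace ℝ (Fin n))
    (hx : x ∈ frontier (wulff flim)) (hN : ‖N‖ = 1)
    (hNsupp : ∀ y ∈ wulff flim, ⟪y, N⟫_ℝ ≤ ⟪x, N⟫_ℝ)
    (hNuniq : ∀ v : EuclideanSpace ℝ (Fin n), ‖v‖ = 1 →
      (∀ y ∈ wulff flim, ⟪y, v⟫_ℝ ≤ ⟪x, v⟫_ℝ) → v = N) :
    ∀ ε > (0 : ℝ), ∃ i₀ : ℕ, ∀ i > i₀,
      wulff (f i) ∩ ray x =
        (⋂ v ∈ {v : EuclideanSpace ℝ (Fin n) | ‖v‖ = 1 ∧ sphDist v N < ε},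
          halfLe v (f i v)) ∩ ray x :=
  stmt3_general f flim hfpos hflimc hflimpos hunif x N hx hNuniq
end
end

section
/- Let (K_i) be a sequence of convex bodies in ℝ^n with non-empty interior converging in the Hausdorff distance to a convex body K with non-empty interior. Let u ∈ S^{n-1} be such that the exposed face F(K,u) = K ∩ {y : y·u = h_K(u)} is a single point {x} (i.e. x is an exposed point of K). Then the exposed faces F(K_i,u) = K_i ∩ {y : y·u = h_{K_i}(u)} converge to {x}: sup{‖y − x‖ : y ∈ F(K_i,u)} → 0 as i → ∞. -/
open MeasureTheory Filter
open scoped InnerProductSpace ENNReal Topology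

noncomputable section

/-!
The face `F(K, u)` is exactly where `⟪·, u⟫` attains its maximum on `K`. Since `x` is the unique
maximiser on the compact set `Klim`, points of `Klim` whose value `⟪·, u⟫` is within some `η` of
the maximum lie close to `x`. A point `y` of `F(K i, u)` is `δ`-close to some `z ∈ Klim`, and
`⟪x, u⟫ ≤ h_{K i}(u) + δ` because `x` is `δ`-close to `K i`; so `⟪z, u⟫ > h_{Klim}(u) - 2δ`,
hence `z`, and with it `y`, is close to `x`.
-/

lemma IsCompact.exists_pos_forall_dist_lt_of_unique_max {X : Type*} [MetricSpace X] {K : Set X}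
    (hK : IsCompact K) {f : X → ℝ} (hf : Continuous f) {c : ℝ} {x : X}
    (hle : ∀ z ∈ K, f z ≤ c) (huniq : ∀ z ∈ K, f z = c → z = x) {ε : ℝ} (hε : 0 < ε) :
    ∃ η > 0, ∀ z ∈ K, c - η < f z → dist z x < ε := by
  have hfar : ∀ z ∈ K ∩ {z | ε ≤ dist z x}, -c < -f z := fun z ⟨hzK, hzε⟩ =>
    neg_lt_neg <| (hle z hzK).lt_of_ne fun hzc => by
      rw [huniq z hzK hzc] at hzε
      exact hε.not_ge (by simpa using hzε)
  have hfar_closed : IsClosed {z | ε ≤ dist z x} := isClosed_le continuous_const (by fun_prop)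
  obtain ⟨m, hcm, hm⟩ :=
    (hK.inter_right hfar_closed).exists_forall_le' hf.neg.continuousOn hfar
  refine ⟨c + m, by linarith, fun z hzK hz => ?_⟩
  by_contra! hzε
  linarith [show m ≤ -f z from hm z ⟨hzK, hzε⟩]

lemma inner_sub_inner_le_dist {E : Type*} [NormedAddCommGroup E] [InnerProductSpace ℝ E] {u : E}
    (hu : ‖u‖ ≤ 1) (y z : E) : ⟪y, u⟫_ℝ - ⟪z, u⟫_ℝ ≤ dist y z := by
  rw [← inner_sub_left, dist_eq_norm]
  calc ⟪y - z, u⟫_ℝ ≤ ‖y - z‖ * ‖u‖ := real_inner_le_norm _ _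
    _ ≤ ‖y - z‖ := mul_le_of_le_one_right (norm_nonneg _) hu

lemma tendsto_sSup_image_nhds_zero {α ι : Type*} {l : Filter ι} {f : α → ℝ} (hf : ∀ a, 0 ≤ f a)
    {s : ι → Set α} (hs : ∀ ε > 0, ∀ᶠ i in l, ∀ a ∈ s i, f a < ε) :
    Tendsto (fun i => sSup (f '' s i)) l (𝓝 0) := by
  refine Metric.tendsto_nhds.2 fun ε hε => (hs (ε / 2) (half_pos hε)).mono fun i hi => ?_
  have hle : sSup (f '' s i) ≤ ε / 2 :=
    Real.sSup_le (by rintro _ ⟨a, ha, rfl⟩; exact (hi a ha).le) (half_pos hε).le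
  have hnonneg : 0 ≤ sSup (f '' s i) := Real.sSup_nonneg (by rintro _ ⟨a, -, rfl⟩; exact hf a)
  rw [Real.dist_eq, sub_zero, abs_of_nonneg hnonneg]
  linarith

section

variable {n : ℕ}

lemma inner_le_suppFn {K : Set (EuclideanSpace ℝ (Fin n))} (hK : Bornology.IsBounded K)
    (u : EuclideanSpace ℝ (Fin n)) {z : EuclideanSpace ℝ (Fin n)} (hz : z ∈ K) :
    ⟪z, u⟫_ℝ ≤ suppFn K u := by
  refine le_csSup ?_ ⟨z, hz, rfl⟩
  obtain ⟨R, hR⟩ := hK.subset_closedBall 0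
  refine ⟨R * ‖u‖, ?_⟩
  rintro _ ⟨y, hy, rfl⟩
  have hyR : ‖y‖ ≤ R := by simpa using hR hy
  exact (real_inner_le_norm y u).trans (mul_le_mul_of_nonneg_right hyR (norm_nonneg u))

lemma inner_le_suppFn_add_of_hausdorffDist_lt {K L : Set (EuclideanSpace ℝ (Fin n))}
    (hK : Bornology.IsBounded K) (hKne : K.Nonempty) (hL : Bornology.IsBounded L)
    {u : EuclideanSpace ℝ (Fin n)} (hu : ‖u‖ ≤ 1) {δ : ℝ} (hδ : Metric.hausdorffDist K L < δ)
    {w : EuclideanSpace ℝ (Fin n)} (hw : w ∈ L) :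
    ⟪w, u⟫_ℝ ≤ suppFn K u + δ := by
  obtain ⟨y, hyK, hwy⟩ := Metric.exists_dist_lt_of_hausdorffDist_lt' hw hδ
    (Metric.hausdorffEDist_ne_top_of_nonempty_of_bounded hKne ⟨w, hw⟩ hK hL)
  linarith [inner_sub_inner_le_dist hu w y, dist_comm w y, inner_le_suppFn hK u hyK]

end

theorem stmt5_general {n : ℕ} (K : ℕ → Set (EuclideanSpace ℝ (Fin n)))
    (Klim : Set (EuclideanSpace ℝ (Fin n)))
    (hKcomp : ∀ i, IsCompact (K i))
    (hLcomp : IsCompact Klim)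
    (hconv : Tendsto (fun i => Metric.hausdorffDist (K i) Klim) atTop (𝓝 0))
    (u x : EuclideanSpace ℝ (Fin n)) (hu : ‖u‖ = 1)
    (hface : Klim ∩ {y | ⟪y, u⟫_ℝ = suppFn Klim u} = {x}) :
    Tendsto (fun i =>
        sSup ((fun y => ‖y - x‖) '' (K i ∩ {y | ⟪y, u⟫_ℝ = suppFn (K i) u})))
      atTop (𝓝 0) := by
  obtain ⟨hxL, hxu_max : ⟪x, u⟫_ℝ = suppFn Klim u⟩ : x ∈ Klim ∩ {y | ⟪y, u⟫_ℝ = suppFn Klim u} :=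
    hface ▸ rfl
  have huniq : ∀ z ∈ Klim, ⟪z, u⟫_ℝ = suppFn Klim u → z = x := fun z hz hzu =>
    (Set.ext_iff.1 hface z).1 ⟨hz, hzu⟩
  refine tendsto_sSup_image_nhds_zero (fun _ => norm_nonneg _) fun ε hε => ?_
  obtain ⟨η, hη, hnear⟩ := hLcomp.exists_pos_forall_dist_lt_of_unique_max
    (f := fun z => ⟪z, u⟫_ℝ) (by fun_prop) (fun z hz => inner_le_suppFn hLcomp.isBounded u hz)
    huniq (half_pos hε)
  have hδ : 0 < min (η / 2) (ε / 2) := by positivity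
  filter_upwards [(tendsto_order.1 hconv).2 _ hδ] with i hi
  rintro y ⟨hyK, hyu : ⟪y, u⟫_ℝ = suppFn (K i) u⟩
  obtain ⟨z, hzL, hyz⟩ := Metric.exists_dist_lt_of_hausdorffDist_lt hyK hi
    (Metric.hausdorffEDist_ne_top_of_nonempty_of_bounded ⟨y, hyK⟩ ⟨x, hxL⟩
      (hKcomp i).isBounded hLcomp.isBounded)
  have hxu := inner_le_suppFn_add_of_hausdorffDist_lt (hKcomp i).isBounded ⟨y, hyK⟩
    hLcomp.isBounded hu.le hi hxL
  have hzx := hnear z hzL (by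
    linarith [inner_sub_inner_le_dist hu.le y z, min_le_left (η / 2) (ε / 2)])
  rw [← dist_eq_norm]
  linarith [dist_triangle y z x, min_le_right (η / 2) (ε / 2)]

/-- Convergence of exposed faces. -/
theorem stmt5 {n : ℕ} (K : ℕ → Set (EuclideanSpace ℝ (Fin n)))
    (Klim : Set (EuclideanSpace ℝ (Fin n)))
    (hKcomp : ∀ i, IsCompact (K i)) (hKconv : ∀ i, Convex ℝ (K i))
    (hKint : ∀ i, (interior (K i)).Nonempty)
    (hLcomp : IsCompact Klim) (hLconv : Convex ℝ Klim) (hLint : (interior Klim).Nonempty)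
    (hconv : Tendsto (fun i => Metric.hausdorffDist (K i) Klim) atTop (𝓝 0))
    (u x : EuclideanSpace ℝ (Fin n)) (hu : ‖u‖ = 1)
    (hface : Klim ∩ {y | ⟪y, u⟫_ℝ = suppFn Klim u} = {x}) :
    Tendsto (fun i =>
        sSup ((fun y => ‖y - x‖) '' (K i ∩ {y | ⟪y, u⟫_ℝ = suppFn (K i) u})))
      atTop (𝓝 0) :=
  stmt5_general K Klim hKcomp hLcomp hconv u x hu hface
end
end

section
/- Let K be a convex body in ℝ^n with non-empty interior and let x ∈ bd K be a regular and exposed boundary point with unique outer unit normal N_x (so K ∩ {y : y·N_x = x·N_x} = {x}). For ε > 0 set K' = K ∩ B̄(x,ε), the intersection with the closed Euclidean ball of radius ε centered at x. Then x is a regular and exposed boundary point of K', and there exists Δ_ε > 0 such that for all 0 < Δ < Δ_ε: K' ∩ {y : y·N_x ≥ x·N_x − Δ} = K ∩ {y : y·N_x ≥ x·N_x − Δ}. -/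
/-! A linear functional that is maximal at `x` on `K ∩ B̄(x, ε)` is maximal at `x` on all of `K`,
because a local maximum of a concave function on a convex set is a global one; so cutting `K` by
the ball changes neither the supporting functionals at `x` nor the exposed face. For the slab, the
compact set of points of `K` outside the open ball stays a positive distance `Δ_ε` below the level
`⟪x, N⟫`, since `x` is the only point of `K` at that level. -/

open MeasureTheory Filter
open scoped InnerProductSpace ENNReal Topology

noncomputable section

theorem IsMaxOn.of_isMaxOn_inter_of_concaveOn {E : Type*} [AddCommGroup E] [TopologicalSpace E]
    [Module ℝ E] [IsTopologicalAddGroup E] [ContinuousSMul ℝ E] {K U : Set E} {f : E → ℝ} {x : E}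
    (hxK : x ∈ K) (hU : U ∈ 𝓝 x) (hf : ConcaveOn ℝ K f) (hmax : IsMaxOn f (K ∩ U) x) :
    IsMaxOn f K x :=
  IsMaxOn.of_isLocalMaxOn_of_concaveOn hxK
    (mem_of_superset (inter_mem_nhdsWithin K hU) fun _ hy => hmax hy) hf

theorem IsCompact.exists_pos_forall_mem_of_unique_max {α : Type*} [TopologicalSpace α]
    {K U : Set α} (hK : IsCompact K) {f : α → ℝ} (hf : Continuous f) {x : α}
    (hlt : ∀ y ∈ K, y ≠ x → f y < f x) (hU : U ∈ 𝓝 x) :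
    ∃ δ > 0, ∀ y ∈ K, f x - δ < f y → y ∈ U := by
  have hpos : ∀ y ∈ K \ interior U, 0 < f x - f y := fun y hy =>
    sub_pos.2 <| hlt y hy.1 fun hyx => hy.2 (hyx ▸ mem_interior_iff_mem_nhds.2 hU)
  obtain ⟨δ, hδ, hgap⟩ := (hK.diff isOpen_interior).exists_forall_le'
    (f := fun y => f x - f y) (by fun_prop) hpos
  refine ⟨δ, hδ, fun y hyK hy => by_contra fun hyU => ?_⟩
  have := hgap y ⟨hyK, fun h => hyU (interior_subset h)⟩
  linarith

theorem stmt7_general {n : ℕ} (K : Set (EuclideanSpace ℝ (Fin n)))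
    (hKcomp : IsCompact K) (hKconv : Convex ℝ K)
    (x N : EuclideanSpace ℝ (Fin n))
    (hx : x ∈ frontier K) (hN : ‖N‖ = 1)
    (hNsupp : ∀ y ∈ K, ⟪y, N⟫_ℝ ≤ ⟪x, N⟫_ℝ)
    (hNuniq : ∀ v : EuclideanSpace ℝ (Fin n), ‖v‖ = 1 →
      (∀ y ∈ K, ⟪y, v⟫_ℝ ≤ ⟪x, v⟫_ℝ) → v = N)
    (hexp : K ∩ {y | ⟪y, N⟫_ℝ = ⟪x, N⟫_ℝ} = {x})
    (ε : ℝ) (hε : 0 < ε) (K' : Set (EuclideanSpace ℝ (Fin n)))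
    (hK' : K' = K ∩ Metric.closedBall x ε) :
    (x ∈ frontier K' ∧
      (∃! v : EuclideanSpace ℝ (Fin n), ‖v‖ = 1 ∧ ∀ y ∈ K', ⟪y, v⟫_ℝ ≤ ⟪x, v⟫_ℝ) ∧
      K' ∩ {y | ⟪y, N⟫_ℝ = ⟪x, N⟫_ℝ} = {x}) ∧
    ∃ Δε > (0 : ℝ), ∀ Δ : ℝ, 0 < Δ → Δ < Δε →
      K' ∩ halfGe N (⟪x, N⟫_ℝ - Δ) = K ∩ halfGe N (⟪x, N⟫_ℝ - Δ) := by
  subst hK'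
  have hxK : x ∈ K := hKcomp.isClosed.frontier_subset hx
  have hxK' : x ∈ K ∩ Metric.closedBall x ε := ⟨hxK, Metric.mem_closedBall_self hε.le⟩
  have hball : Metric.closedBall x ε ∈ 𝓝 x := Metric.closedBall_mem_nhds x hε
  have hlt : ∀ y ∈ K, y ≠ x → ⟪y, N⟫_ℝ < ⟪x, N⟫_ℝ := fun y hyK hyx =>
    (hNsupp y hyK).lt_of_ne fun h => hyx (hexp.subset ⟨hyK, h⟩)
  obtain ⟨δ, hδ, hslab⟩ := hKcomp.exists_pos_forall_mem_of_unique_max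
    (f := fun y => ⟪y, N⟫_ℝ) (by fun_prop) hlt hball
  refine ⟨⟨⟨subset_closure hxK', fun h => hx.2 (interior_mono Set.inter_subset_left h)⟩,
    ⟨N, ⟨hN, fun y hy => hNsupp y hy.1⟩, fun v ⟨hv, hvsupp⟩ => hNuniq v hv ?_⟩,
    Set.Subset.antisymm (fun y hy => hexp.subset ⟨hy.1.1, hy.2⟩)
      (Set.singleton_subset_iff.2 ⟨hxK', rfl⟩)⟩, δ, hδ, fun Δ _ hΔ => ?_⟩
  · exact IsMaxOn.of_isMaxOn_inter_of_concaveOn hxK hball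
      (((innerₗ _).flip v).concaveOn hKconv) hvsupp
  · rw [Set.inter_right_comm, Set.inter_eq_left]
    rintro y ⟨hyK, hyN⟩
    exact hslab y hyK (by linarith [show ⟪x, N⟫_ℝ - Δ ≤ ⟪y, N⟫_ℝ from hyN])

/-- Intersecting with a small ball around a regular exposed boundary point. -/
theorem stmt7 {n : ℕ} (K : Set (EuclideanSpace ℝ (Fin n)))
    (hKcomp : IsCompact K) (hKconv : Convex ℝ K) (hKint : (interior K).Nonempty)
    (x N : EuclideanSpace ℝ (Fin n))
    (hx : x ∈ frontier K) (hN : ‖N‖ = 1)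
    (hNsupp : ∀ y ∈ K, ⟪y, N⟫_ℝ ≤ ⟪x, N⟫_ℝ)
    (hNuniq : ∀ v : EuclideanSpace ℝ (Fin n), ‖v‖ = 1 →
      (∀ y ∈ K, ⟪y, v⟫_ℝ ≤ ⟪x, v⟫_ℝ) → v = N)
    (hexp : K ∩ {y | ⟪y, N⟫_ℝ = ⟪x, N⟫_ℝ} = {x})
    (ε : ℝ) (hε : 0 < ε) (K' : Set (EuclideanSpace ℝ (Fin n)))
    (hK' : K' = K ∩ Metric.closedBall x ε) :
    (x ∈ frontier K' ∧
      (∃! v : EuclideanSpace ℝ (Fin n), ‖v‖ = 1 ∧ ∀ y ∈ K', ⟪y, v⟫_ℝ ≤ ⟪x, v⟫_ℝ) ∧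
      K' ∩ {y | ⟪y, N⟫_ℝ = ⟪x, N⟫_ℝ} = {x}) ∧
    ∃ Δε > (0 : ℝ), ∀ Δ : ℝ, 0 < Δ → Δ < Δε →
      K' ∩ halfGe N (⟪x, N⟫_ℝ - Δ) = K ∩ halfGe N (⟪x, N⟫_ℝ - Δ) :=
  stmt7_general K hKcomp hKconv x N hx hN hNsupp hNuniq hexp ε hε K' hK'
end
end

section
/- Let K be a convex body in ℝ^n with non-empty interior and let x ∈ bd K be a regular and exposed boundary point with unique outer unit normal N_x. For ε > 0 set K' = K ∩ B̄(x,ε). Then there exist ξ_ε > 0 and η_ε > 0 such that for all v ∈ S^{n-1} with d_s(v, N_x) < ξ_ε and all 0 < Δ < η_ε: K' ∩ {y : y·v ≥ x·v − Δ} = K ∩ {y : y·v ≥ x·v − Δ}. -/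
open MeasureTheory Filter
open scoped InnerProductSpace ENNReal Topology

noncomputable section

/-!
Exposedness and compactness give a positive gap `δ`: every `y ∈ K` outside the open ball `B(x, ε)`
satisfies `⟪y - x, N⟫ ≤ -δ`. If `K ⊆ B̄(x, r)` and `v` is within chord distance `δ / (2r)` of `N`
(which holds once `d_s(v, N) < δ / (2r)`, since chords are shorter than arcs), then tilting `N` to
`v` changes `⟪y - x, ·⟫` by at most `δ / 2`, so no such `y` lies in a cap of depth less than `δ / 2`.
-/

lemma IsCompact.exists_pos_forall_le_sub {X : Type*} [TopologicalSpace X] {s : Set X}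
    (hs : IsCompact s) {f : X → ℝ} (hf : ContinuousOn f s) {a : ℝ} (h : ∀ y ∈ s, f y < a) :
    ∃ δ > 0, ∀ y ∈ s, f y ≤ a - δ := by
  rcases s.eq_empty_or_nonempty with rfl | hne
  · exact ⟨1, one_pos, by simp⟩
  · obtain ⟨y₀, hy₀, hmax⟩ := hs.exists_isMaxOn hne hf
    exact ⟨a - f y₀, sub_pos.2 (h y₀ hy₀), fun y hy => by simpa using hmax hy⟩

lemma exists_pos_inner_sub_le_neg_of_exposed {E : Type*} [NormedAddCommGroup E]
    [InnerProductSpace ℝ E] {K : Set E} (hK : IsCompact K) {x N : E}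
    (hsupp : ∀ y ∈ K, ⟪y, N⟫_ℝ ≤ ⟪x, N⟫_ℝ) (hexp : K ∩ {y | ⟪y, N⟫_ℝ = ⟪x, N⟫_ℝ} = {x})
    {ε : ℝ} (hε : 0 < ε) :
    ∃ δ > 0, ∀ y ∈ K, ε ≤ dist y x → ⟪y - x, N⟫_ℝ ≤ -δ := by
  have hneg : ∀ y ∈ K \ Metric.ball x ε, ⟪y - x, N⟫_ℝ < 0 := by
    rintro y ⟨hyK, hyx⟩
    rw [inner_sub_left, sub_neg]
    refine (hsupp y hyK).lt_of_ne fun heq => hyx ?_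
    have hy : y ∈ K ∩ {y | ⟪y, N⟫_ℝ = ⟪x, N⟫_ℝ} := ⟨hyK, heq⟩
    rw [hexp, Set.mem_singleton_iff] at hy
    simpa [hy] using hε
  obtain ⟨δ, hδ, hgap⟩ := (hK.diff Metric.isOpen_ball).exists_pos_forall_le_sub
    (by fun_prop) hneg
  exact ⟨δ, hδ, fun y hyK hyx => by
    simpa using hgap y ⟨hyK, by simpa [Metric.mem_ball] using hyx⟩⟩

lemma norm_sub_le_sphDist {n : ℕ} {u v : EuclideanSpace ℝ (Fin n)} (hu : ‖u‖ = 1)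
    (hv : ‖v‖ = 1) : ‖u - v‖ ≤ sphDist u v := by
  have hinner : |⟪u, v⟫_ℝ| ≤ 1 := by
    simpa [hu, hv] using abs_real_inner_le_norm u v
  have hcos : Real.cos (sphDist u v) = ⟪u, v⟫_ℝ :=
    Real.cos_arccos (abs_le.1 hinner).1 (abs_le.1 hinner).2
  have hsq : ‖u - v‖ ^ 2 ≤ sphDist u v ^ 2 := by
    rw [norm_sub_sq_real, hu, hv, ← hcos]
    linarith [Real.one_sub_sq_div_two_le_cos (x := sphDist u v)]
  exact (pow_le_pow_iff_left₀ (norm_nonneg _) (Real.arccos_nonneg _) two_ne_zero).1 hsq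

theorem stmt8_general {n : ℕ} (K : Set (EuclideanSpace ℝ (Fin n)))
    (hKcomp : IsCompact K)
    (x N : EuclideanSpace ℝ (Fin n))
    (hN : ‖N‖ = 1)
    (hNsupp : ∀ y ∈ K, ⟪y, N⟫_ℝ ≤ ⟪x, N⟫_ℝ)
    (hexp : K ∩ {y | ⟪y, N⟫_ℝ = ⟪x, N⟫_ℝ} = {x})
    (ε : ℝ) (hε : 0 < ε) (K' : Set (EuclideanSpace ℝ (Fin n)))
    (hK' : K' = K ∩ Metric.closedBall x ε) :
    ∃ ξε > (0 : ℝ), ∃ ηε > (0 : ℝ),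
      ∀ v : EuclideanSpace ℝ (Fin n), ‖v‖ = 1 → sphDist v N < ξε →
        ∀ Δ : ℝ, 0 < Δ → Δ < ηε →
          K' ∩ halfGe v (⟪x, v⟫_ℝ - Δ) = K ∩ halfGe v (⟪x, v⟫_ℝ - Δ) := by
  obtain ⟨δ, hδ, hgap⟩ := exists_pos_inner_sub_le_neg_of_exposed hKcomp hNsupp hexp hε
  obtain ⟨r, hr, hKr⟩ := hKcomp.isBounded.subset_closedBall_lt 0 x
  refine ⟨δ / (2 * r), by positivity, δ / 2, by positivity, ?_⟩
  intro v hv hvN Δ hΔ hΔδ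
  rw [hK', Set.inter_right_comm, Set.inter_eq_left]
  rintro y ⟨hyK, hyv⟩
  by_contra hyx
  have htilt : ‖y - x‖ * ‖v - N‖ ≤ δ / 2 := calc
    ‖y - x‖ * ‖v - N‖ ≤ r * (δ / (2 * r)) :=
      mul_le_mul (hKr hyK) ((norm_sub_le_sphDist hv hN).trans hvN.le) (norm_nonneg _) hr.le
    _ = δ / 2 := by field_simp
  have hcap : ⟪y - x, v⟫_ℝ ≤ -(δ / 2) := calc
    ⟪y - x, v⟫_ℝ = ⟪y - x, N⟫_ℝ + ⟪y - x, v - N⟫_ℝ := by rw [inner_sub_right]; ring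
    _ ≤ -δ + ‖y - x‖ * ‖v - N‖ :=
      add_le_add (hgap y hyK (not_le.1 hyx).le) (real_inner_le_norm _ _)
    _ ≤ -(δ / 2) := by linarith
  simp only [halfGe, Set.mem_ofPred_eq] at hyv
  linarith [inner_sub_left (𝕜 := ℝ) y x v]

/-- Caps in nearby directions are also local. -/
theorem stmt8 {n : ℕ} (K : Set (EuclideanSpace ℝ (Fin n)))
    (hKcomp : IsCompact K) (hKconv : Convex ℝ K) (hKint : (interior K).Nonempty)
    (x N : EuclideanSpace ℝ (Fin n))
    (hx : x ∈ frontier K) (hN : ‖N‖ = 1)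
    (hNsupp : ∀ y ∈ K, ⟪y, N⟫_ℝ ≤ ⟪x, N⟫_ℝ)
    (hNuniq : ∀ v : EuclideanSpace ℝ (Fin n), ‖v‖ = 1 →
      (∀ y ∈ K, ⟪y, v⟫_ℝ ≤ ⟪x, v⟫_ℝ) → v = N)
    (hexp : K ∩ {y | ⟪y, N⟫_ℝ = ⟪x, N⟫_ℝ} = {x})
    (ε : ℝ) (hε : 0 < ε) (K' : Set (EuclideanSpace ℝ (Fin n)))
    (hK' : K' = K ∩ Metric.closedBall x ε) :
    ∃ ξε > (0 : ℝ), ∃ ηε > (0 : ℝ),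
      ∀ v : EuclideanSpace ℝ (Fin n), ‖v‖ = 1 → sphDist v N < ξε →
        ∀ Δ : ℝ, 0 < Δ → Δ < ηε →
          K' ∩ halfGe v (⟪x, v⟫_ℝ - Δ) = K ∩ halfGe v (⟪x, v⟫_ℝ - Δ) :=
  stmt8_general K hKcomp x N hN hNsupp hexp ε hε K' hK'
end
end

section
/- Let K be a convex body in ℝ^n with non-empty interior, μ a finite non-negative Borel measure on int K equivalent to Lebesgue measure on int K, and x ∈ bd K a regular and exposed boundary point. For ε > 0 set K' = K ∩ B̄(x,ε) and assume 0 ∈ int K'. Then there exists δ_ε > 0 such that for all 0 < δ < δ_ε: 0 ∈ int(F^μ_δ K' ∩ F^μ_δ K) and x^{K'}_δ = x^K_δ, where for a convex body K* containing 0 in the interior of its floating body, x^{K*}_δ denotes the unique point of bd F^μ_δ K* on the ray pos{x} (and F^μ_δ K' is the weighted floating body of K' with respect to μ restricted to int K'). -/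
open MeasureTheory Filter
open scoped InnerProductSpace ENNReal Topology

noncomputable section

/-!
A sequence of caps whose measures tend to zero has normals converging to some `w` (compactness of
the sphere), and the open part of `int K'` beyond the limiting hyperplane lies in all late caps;
since `μ` charges it, small caps are shallow. Hence for small `δ` both floating bodies contain a
fixed ball around `0` and points of the ray `pos{x}` arbitrarily close to `x`. A small cap of `K'`
through a point near `x` has normal close to `N`, as `N` is the only normal of `K'` at `x`; since
`x` is exposed, the cap of `K` cut by the same half-space then lies in `B(x, ε)` and has the same
`μ`-measure. So the last point of `F^μ_δ K` on the ray lies in `F^μ_δ K' ⊆ F^μ_δ K`, and both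
floating bodies leave the ray there.
-/

theorem measure_eq_zero_of_forall_eventually_mem {α : Type*} [MeasurableSpace α]
    {ν : Measure α} {s : ℕ → Set α} {O : Set α}
    (hs : Tendsto (fun k => ν (s k)) atTop (𝓝 0)) (hO : ∀ y ∈ O, ∀ᶠ k in atTop, y ∈ s k) :
    ν O = 0 := by
  have hliminf : O ⊆ ⋃ m, ⋂ k ≥ m, s k := fun y hy => by
    simpa using eventually_atTop.1 (hO y hy)
  refine measure_mono_null hliminf (measure_iUnion_null fun m => ?_)
  refine le_antisymm (ge_of_tendsto hs ?_) zero_le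
  filter_upwards [eventually_ge_atTop m] with k hk
  exact measure_mono (Set.biInter_subset_of_mem hk)

theorem measure_inter_le_restrict_interior {α : Type*} [TopologicalSpace α] [MeasurableSpace α]
    [OpensMeasurableSpace α] {μ : Measure α} {K K' H : Set α} (hμ : μ (interior K)ᶜ = 0)
    (h : interior K ∩ H ⊆ interior K') : μ (K ∩ H) ≤ μ.restrict (interior K') (K' ∩ H) :=
  calc μ (K ∩ H) ≤ μ (interior K ∩ H ∪ (interior K)ᶜ) :=
        measure_mono fun z hz => (em (z ∈ interior K)).imp (fun hzK => ⟨hzK, hz.2⟩) id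
    _ ≤ μ (interior K ∩ H) := by grw [measure_union_le, hμ, add_zero]
    _ ≤ μ.restrict (interior K') (K' ∩ H) := by
        rw [Measure.restrict_apply' measurableSet_interior]
        exact measure_mono fun z hz => ⟨⟨interior_subset (h hz), hz.2⟩, h hz⟩

def ChargesOpenSubsets {α : Type*} [TopologicalSpace α] [MeasurableSpace α]
    (ν : Measure α) (U : Set α) : Prop :=
  ∀ O, IsOpen O → O.Nonempty → O ⊆ U → ν O ≠ 0

section ChargesOpenSubsets

variable {α : Type*} [TopologicalSpace α] [MeasurableSpace α] {ν : Measure α} {U V : Set α}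

theorem ChargesOpenSubsets.mono (hν : ChargesOpenSubsets ν U) (hVU : V ⊆ U) :
    ChargesOpenSubsets ν V :=
  fun O hO hne hOV => hν O hO hne (hOV.trans hVU)

theorem ChargesOpenSubsets.restrict (hν : ChargesOpenSubsets ν U) (hU : MeasurableSet U) :
    ChargesOpenSubsets (ν.restrict U) U := fun O hO hne hOU => by
  rw [Measure.restrict_apply' hU, Set.inter_eq_self_of_subset_left hOU]
  exact hν O hO hne hOU

theorem chargesOpenSubsets_of_absolutelyContinuous (m : Measure α) [m.IsOpenPosMeasure]
    (h : m.restrict U ≪ ν.restrict U) (hU : MeasurableSet U) : ChargesOpenSubsets ν U :=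
  fun O hO hne hOU hνO => by
    have := @h O (by rw [Measure.restrict_apply' hU, Set.inter_eq_self_of_subset_left hOU, hνO])
    rw [Measure.restrict_apply' hU, Set.inter_eq_self_of_subset_left hOU] at this
    exact hO.measure_ne_zero m hne this

end ChargesOpenSubsets

theorem tendsto_ofReal_rpow_nhdsGT_zero (n : ℕ) :
    Tendsto (fun δ : ℝ => ENNReal.ofReal (δ ^ (((n : ℝ) + 1) / 2))) (𝓝[>] 0) (𝓝 0) := by
  have hp : (0 : ℝ) < ((n : ℝ) + 1) / 2 := by positivity
  have : Tendsto (fun δ : ℝ => δ ^ (((n : ℝ) + 1) / 2)) (𝓝[>] 0) (𝓝 0) := by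
    simpa [Real.zero_rpow hp.ne'] using
      (Real.continuousAt_rpow_const 0 _ (Or.inr hp.le)).tendsto.mono_left nhdsWithin_le_nhds
  simpa using ENNReal.tendsto_ofReal this

section InnerProductSpace

variable {E : Type*} [NormedAddCommGroup E] [InnerProductSpace ℝ E]

theorem Convex.smul_mem_interior_of_zero_mem_interior {F : Set E} (hF : Convex ℝ F)
    (h0 : (0 : E) ∈ interior F) {y : E} (hy : y ∈ closure F) {u : ℝ} (hu0 : 0 ≤ u)
    (hu1 : u < 1) : u • y ∈ interior F := by
  simpa using hF.combo_interior_closure_mem_interior h0 hy (sub_pos.2 hu1) hu0 (sub_add_cancel 1 u)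

theorem Convex.subset_closure_interior {S : Set E} (hS : Convex ℝ S)
    (hint : (interior S).Nonempty) : S ⊆ closure (interior S) := by
  rw [hS.closure_interior_eq_closure_of_nonempty_interior hint]
  exact subset_closure

theorem le_one_of_smul_mem_of_mem_frontier {S : Set E} (hS : Convex ℝ S) (h0 : 0 ∈ interior S)
    {x : E} (hx : x ∈ frontier S) {t : ℝ} (ht : t • x ∈ S) : t ≤ 1 := by
  by_contra! ht1
  have hint := hS.smul_mem_interior_of_zero_mem_interior h0 (subset_closure ht)
    (inv_nonneg.2 (zero_le_one.trans ht1.le)) (inv_lt_one_of_one_lt₀ ht1)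
  rw [smul_smul, inv_mul_cancel₀ (by positivity), one_smul] at hint
  exact hx.2 hint

theorem IsCompact.exists_isGreatest_smul_mem {F : Set E} (hF : IsCompact F) (h0 : (0 : E) ∈ F)
    {x : E} (hx : x ≠ 0) : ∃ t, IsGreatest {u : ℝ | 0 ≤ u ∧ u • x ∈ F} t :=
  (((isClosedEmbedding_smul_left hx).isCompact_preimage hF).inter_left
    isClosed_Ici).exists_isGreatest ⟨0, Set.mem_Ici.2 le_rfl, by simpa using h0⟩

theorem Convex.inner_le_of_forall_mem_closedBall {K : Set E} (hK : Convex ℝ K) {x w : E}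
    (hx : x ∈ K) {ε : ℝ} (hε : 0 < ε)
    (h : ∀ z ∈ K ∩ Metric.closedBall x ε, ⟪z, w⟫_ℝ ≤ ⟪x, w⟫_ℝ) :
    ∀ z ∈ K, ⟪z, w⟫_ℝ ≤ ⟪x, w⟫_ℝ := by
  intro z hz
  set s := ε / (ε + ‖z - x‖)
  have hs : 0 < s := by positivity
  have hs1 : s ≤ 1 := (div_le_one (by positivity)).2 (by linarith [norm_nonneg (z - x)])
  have hnear : x + s • (z - x) ∈ K ∩ Metric.closedBall x ε := by
    refine ⟨hK.add_smul_sub_mem hx hz ⟨hs.le, hs1⟩, ?_⟩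
    rw [Metric.mem_closedBall, dist_eq_norm, add_sub_cancel_left, norm_smul,
      Real.norm_of_nonneg hs.le, div_mul_eq_mul_div, div_le_iff₀ (by positivity)]
    nlinarith [norm_nonneg (z - x)]
  have := h _ hnear
  rw [inner_add_left, inner_smul_left, inner_sub_left, RCLike.conj_to_real] at this
  nlinarith

theorem exists_mem_inner_gt_of_mem_closure {U : Set E} {x : E} (hx : x ∈ closure U) {d : ℝ}
    (hd : 0 < d) {v : E} (hv : ‖v‖ = 1) : ∃ y ∈ U, ⟪x, v⟫_ℝ - d < ⟪y, v⟫_ℝ := by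
  obtain ⟨y, hyU, hxy⟩ := Metric.mem_closure_iff.1 hx d hd
  refine ⟨y, hyU, ?_⟩
  have := real_inner_le_norm (x - y) v
  rw [inner_sub_left, hv, mul_one, ← dist_eq_norm] at this
  linarith

theorem IsCompact.exists_forall_dist_lt_of_exposed {K : Set E} (hK : IsCompact K) {x N : E}
    (hNsupp : ∀ y ∈ K, ⟪y, N⟫_ℝ ≤ ⟪x, N⟫_ℝ) (hexp : K ∩ {y | ⟪y, N⟫_ℝ = ⟪x, N⟫_ℝ} = {x})
    {ε : ℝ} (hε : 0 < ε) :
    ∃ V ∈ 𝓝 N, ∃ d > 0, ∀ v ∈ V, ∀ y ∈ K, ⟪x, v⟫_ℝ - d ≤ ⟪y, v⟫_ℝ → dist y x < ε := by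
  suffices h : ∀ᶠ p in 𝓝 N ×ˢ 𝓝 (0 : ℝ), ∀ y ∈ K, ⟪x, p.1⟫_ℝ - p.2 ≤ ⟪y, p.1⟫_ℝ →
      dist y x < ε by
    obtain ⟨P, hP, Q, hQ, hPQ⟩ := eventually_prod_iff.1 h
    obtain ⟨d, hdQ, hd⟩ := ((hQ.filter_mono nhdsWithin_le_nhds).and
      (self_mem_nhdsWithin : Set.Ioi (0 : ℝ) ∈ 𝓝[>] 0)).exists
    exact ⟨{v | P v}, hP, d, hd, fun v hv => hPQ hv hdQ⟩
  by_contra h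
  obtain ⟨p, hp, hbad⟩ := frequently_iff_seq_forall.1 (not_eventually.1 h)
  push Not at hbad
  choose y hyK hy hyx using hbad
  obtain ⟨z, hzK, φ, hφ, hyz⟩ := hK.tendsto_subseq hyK
  have hpφ := hp.comp hφ.tendsto_atTop
  have hv : Tendsto (fun k => (p (φ k)).1) atTop (𝓝 N) := tendsto_fst.comp hpφ
  have hlim : Tendsto (fun k => ⟪x, (p (φ k)).1⟫_ℝ - (p (φ k)).2) atTop (𝓝 (⟪x, N⟫_ℝ - 0)) :=
    (tendsto_const_nhds.inner hv).sub (tendsto_snd.comp hpφ)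
  have hxz : ⟪x, N⟫_ℝ - 0 ≤ ⟪z, N⟫_ℝ :=
    le_of_tendsto_of_tendsto' hlim (hyz.inner hv) fun k => hy (φ k)
  have hzx : z ∈ K ∩ {y | ⟪y, N⟫_ℝ = ⟪x, N⟫_ℝ} :=
    ⟨hzK, le_antisymm (hNsupp z hzK) (by linarith)⟩
  rw [hexp, Set.mem_singleton_iff] at hzx
  have hdist : Tendsto (fun k => dist (y (φ k)) x) atTop (𝓝 0) := by
    simpa [hzx] using hyz.dist (tendsto_const_nhds (x := x))
  obtain ⟨k, hk⟩ := (hdist.eventually (gt_mem_nhds hε)).exists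
  exact (hyx (φ k)).not_gt hk

end InnerProductSpace

section FloatBody

variable {n : ℕ} {ν ν' : Measure (EuclideanSpace ℝ (Fin n))}
  {S S' U F : Set (EuclideanSpace ℝ (Fin n))} {δ : ℝ} {x y : EuclideanSpace ℝ (Fin n)}

theorem mem_floatBody_iff :
    y ∈ floatBody ν S δ ↔ ∀ v c, ‖v‖ = 1 →
      ν (S ∩ halfGe v c) ≤ ENNReal.ofReal (δ ^ (((n : ℝ) + 1) / 2)) → ⟪y, v⟫_ℝ ≤ c := by
  refine ⟨fun hy v c hv hcap => hy _ ⟨v, c, hv, hcap, rfl⟩, ?_⟩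
  rintro hy _ ⟨v, c, hv, hcap, rfl⟩
  exact hy v c hv hcap

theorem isClosed_floatBody_s9 : IsClosed (floatBody ν S δ) :=
  isClosed_sInter <| by
    rintro _ ⟨v, c, -, -, rfl⟩
    exact isClosed_le (continuous_id.inner continuous_const) continuous_const

theorem convex_floatBody_s9 : Convex ℝ (floatBody ν S δ) :=
  convex_sInter <| by
    rintro _ ⟨v, c, -, -, rfl⟩
    exact convex_halfSpace_le
      ⟨fun a b => inner_add_left a b v, fun r a => real_inner_smul_left a v r⟩ c

theorem mem_floatBody_of_forall_cap (hy : y ∈ floatBody ν S δ)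
    (h : ∀ v c, ‖v‖ = 1 → ν' (S' ∩ halfGe v c) ≤ ENNReal.ofReal (δ ^ (((n : ℝ) + 1) / 2)) →
      c < ⟪y, v⟫_ℝ → ν (S ∩ halfGe v c) ≤ ENNReal.ofReal (δ ^ (((n : ℝ) + 1) / 2))) :
    y ∈ floatBody ν' S' δ := by
  rw [mem_floatBody_iff] at hy ⊢
  intro v c hv hcap
  by_contra! hc
  exact (hy v c hv (h v c hv hcap hc)).not_gt hc

theorem floatBody_mono (h : ∀ v c, ν' (S' ∩ halfGe v c) ≤ ν (S ∩ halfGe v c)) :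
    floatBody ν' S' δ ⊆ floatBody ν S δ := fun _ hy =>
  mem_floatBody_of_forall_cap hy fun v c _ hcap _ => (h v c).trans hcap

theorem floatBody_restrict_interior_subset (hS'S : S' ⊆ S) :
    floatBody (ν.restrict (interior S')) S' δ ⊆ floatBody ν S δ :=
  floatBody_mono fun v c => by
    rw [Measure.restrict_apply' measurableSet_interior]
    exact measure_mono fun z hz => ⟨hS'S hz.1.1, hz.1.2⟩

theorem floatBody_subset_s9 (hS : IsClosed S) (hconv : Convex ℝ S) (hne : S.Nonempty) :
    floatBody ν S δ ⊆ S := by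
  intro y hy
  by_contra hyS
  obtain ⟨f, u, hfS, hfy⟩ := geometric_hahn_banach_closed_point hconv hS hyS
  set w := (InnerProductSpace.toDual ℝ _).symm f
  have hw : ∀ z, ⟪z, w⟫_ℝ = f z := fun z => by
    rw [real_inner_comm, InnerProductSpace.toDual_symm_apply]
  have hw0 : 0 < ‖w‖ := by
    obtain ⟨a, ha⟩ := hne
    refine norm_pos_iff.2 fun h0 => ?_
    have := (hfS a ha).trans hfy
    rw [← hw, ← hw, h0, inner_zero_right, inner_zero_right] at this
    exact lt_irrefl _ this
  have hcap : S ∩ halfGe (‖w‖⁻¹ • w) (‖w‖⁻¹ * u) = ∅ := by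
    refine Set.eq_empty_of_forall_notMem fun z ⟨hzS, hz⟩ => ?_
    have : ‖w‖⁻¹ * u ≤ ‖w‖⁻¹ * f z := by rwa [← hw, ← inner_smul_right]
    exact (hfS z hzS).not_ge (le_of_mul_le_mul_left this (inv_pos.2 hw0))
  have hunit : ‖‖w‖⁻¹ • w‖ = 1 := by rw [norm_smul, norm_inv, norm_norm, inv_mul_cancel₀ hw0.ne']
  have := mem_floatBody_iff.1 hy _ _ hunit (by rw [hcap, measure_empty]; exact zero_le)
  rw [inner_smul_right, hw] at this
  exact hfy.not_ge (le_of_mul_le_mul_left this (inv_pos.2 hw0))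

theorem smul_mem_floatBody {q d : ℝ} (hq : 0 < q) (hd : 0 < d)
    (hqc : ∀ v c, ‖v‖ = 1 → ν (S ∩ halfGe v c) ≤ ENNReal.ofReal (δ ^ (((n : ℝ) + 1) / 2)) → q < c)
    (hdc : ∀ v c, ‖v‖ = 1 → ν (S ∩ halfGe v c) ≤ ENNReal.ofReal (δ ^ (((n : ℝ) + 1) / 2)) →
      ⟪x, v⟫_ℝ - d < c) :
    (q / (q + d)) • x ∈ floatBody ν S δ := by
  refine mem_floatBody_iff.2 fun v c hv hcap => ?_
  have h1 := hqc v c hv hcap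
  have h2 := hdc v c hv hcap
  -- `q ⟪x, v⟫ < q (c + d) < c (q + d)`
  rw [real_inner_smul_left, div_mul_eq_mul_div, div_le_iff₀ (by positivity)]
  nlinarith

theorem frontier_inter_ray_eq_singleton (hF : IsClosed F) (hconv : Convex ℝ F)
    (h0 : 0 ∈ interior F) {t : ℝ} (ht : IsGreatest {u : ℝ | 0 ≤ u ∧ u • x ∈ F} t) :
    frontier F ∩ ray x = {t • x} := by
  obtain ⟨⟨ht0, htF⟩, hmax⟩ := ht
  ext y
  constructor
  · rintro ⟨hyF, u, hu0, rfl⟩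
    rcases (hmax ⟨hu0, hF.frontier_subset hyF⟩).lt_or_eq with hlt | rfl
    · have htpos : 0 < t := hu0.trans_lt hlt
      have hint := hconv.smul_mem_interior_of_zero_mem_interior h0 (subset_closure htF)
        (div_nonneg hu0 ht0) ((div_lt_one htpos).2 hlt)
      rw [smul_smul, div_mul_cancel₀ _ htpos.ne'] at hint
      exact absurd hint hyF.2
    · rfl
  · rintro rfl
    refine ⟨⟨subset_closure htF, fun hint => ?_⟩, t, ht0, rfl⟩
    have hnear : ∀ᶠ u in 𝓝[>] t, u • x ∈ interior F :=
      nhdsWithin_le_nhds <| (continuous_id.smul continuous_const).continuousAt.preimage_mem_nhds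
        (isOpen_interior.mem_nhds hint)
    obtain ⟨u, hu, htu⟩ := (hnear.and self_mem_nhdsWithin).exists
    exact (hmax ⟨ht0.trans htu.le, interior_subset hu⟩).not_gt htu

theorem frontier_floatBody_inter_ray_eq (hF'F : floatBody ν' S' δ ⊆ floatBody ν S δ)
    (h0 : 0 ∈ interior (floatBody ν' S' δ)) {t : ℝ}
    (ht : IsGreatest {u : ℝ | 0 ≤ u ∧ u • x ∈ floatBody ν S δ} t)
    (htF' : t • x ∈ floatBody ν' S' δ) :
    frontier (floatBody ν' S' δ) ∩ ray x = {t • x} ∧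
      frontier (floatBody ν S δ) ∩ ray x = {t • x} :=
  ⟨frontier_inter_ray_eq_singleton isClosed_floatBody_s9 convex_floatBody_s9 h0
      ⟨⟨ht.1.1, htF'⟩, fun _ hu => ht.2 ⟨hu.1, hF'F hu.2⟩⟩,
    frontier_inter_ray_eq_singleton isClosed_floatBody_s9 convex_floatBody_s9 (interior_mono hF'F h0) ht⟩

-- The points of `U` beyond the limiting hyperplane lie in all late caps.
theorem inner_le_of_tendsto_measure_cap (hU : IsOpen U) (hν : ChargesOpenSubsets ν U)
    (hUS : U ⊆ S) {v : ℕ → EuclideanSpace ℝ (Fin n)} {w : EuclideanSpace ℝ (Fin n)}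
    {b c : ℕ → ℝ} {a : ℝ} (hv : Tendsto v atTop (𝓝 w)) (hb : Tendsto b atTop (𝓝 a))
    (hcb : ∀ k, c k ≤ b k) (hcap : Tendsto (fun k => ν (S ∩ halfGe (v k) (c k))) atTop (𝓝 0)) :
    ∀ y ∈ U, ⟪y, w⟫_ℝ ≤ a := by
  intro y hyU
  by_contra! hy
  obtain ⟨m, ham, hmy⟩ := exists_between hy
  set O := U ∩ {z | m < ⟪z, w⟫_ℝ}
  have hO : IsOpen O :=
    hU.inter (isOpen_lt continuous_const (continuous_id.inner continuous_const))
  refine hν O hO ⟨y, hyU, hmy⟩ Set.inter_subset_left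
    (measure_eq_zero_of_forall_eventually_mem hcap fun z hz => ?_)
  have hzv : Tendsto (fun k => ⟪z, v k⟫_ℝ) atTop (𝓝 ⟪z, w⟫_ℝ) := tendsto_const_nhds.inner hv
  filter_upwards [hb.eventually_lt_const ham, hzv.eventually_const_lt hz.2] with k hbk hzk
  exact ⟨hUS hz.1, (hcb k).trans (hbk.trans hzk).le⟩

theorem eventually_lt_of_measure_cap_le (hU : IsOpen U) (hν : ChargesOpenSubsets ν U)
    (hUS : U ⊆ S) {g : EuclideanSpace ℝ (Fin n) → ℝ} (hg : Continuous g)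
    (hgU : ∀ v, ‖v‖ = 1 → ∃ y ∈ U, g v < ⟪y, v⟫_ℝ) :
    ∀ᶠ ρ in 𝓝 (0 : ℝ≥0∞), ∀ v c, ‖v‖ = 1 → ν (S ∩ halfGe v c) ≤ ρ → g v < c := by
  by_contra h
  obtain ⟨ρ, hρ, hbad⟩ := frequently_iff_seq_forall.1 (not_eventually.1 h)
  push Not at hbad
  choose v c hv hcap hc using hbad
  obtain ⟨w, hw, φ, hφ, hvw⟩ := (isCompact_sphere 0 1).tendsto_subseq
    fun k => mem_sphere_zero_iff_norm.2 (hv k)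
  obtain ⟨y, hyU, hy⟩ := hgU w (mem_sphere_zero_iff_norm.1 hw)
  refine (inner_le_of_tendsto_measure_cap hU hν hUS hvw ((hg.tendsto w).comp hvw)
    (fun k => hc (φ k)) ?_ y hyU).not_gt hy
  exact tendsto_of_tendsto_of_tendsto_of_le_of_le tendsto_const_nhds
    (hρ.comp hφ.tendsto_atTop) (fun _ => zero_le) fun k => hcap (φ k)

theorem eventually_lt_of_measure_cap_le_of_ball_subset (hU : IsOpen U)
    (hν : ChargesOpenSubsets ν U) (hUS : U ⊆ S) {q r : ℝ} (hq : 0 ≤ q) (hqr : q < r)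
    (hball : Metric.ball 0 r ⊆ U) :
    ∀ᶠ ρ in 𝓝 (0 : ℝ≥0∞), ∀ v c, ‖v‖ = 1 → ν (S ∩ halfGe v c) ≤ ρ → q < c := by
  refine eventually_lt_of_measure_cap_le hU hν hUS continuous_const fun v hv => ?_
  obtain ⟨s, hqs, hsr⟩ := exists_between hqr
  refine ⟨s • v, hball ?_, ?_⟩
  · rwa [mem_ball_zero_iff, norm_smul, hv, mul_one, Real.norm_of_nonneg (hq.trans hqs.le)]
  · rwa [real_inner_smul_left, real_inner_self_eq_norm_sq, hv, one_pow, mul_one]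

theorem eventually_mem_of_measure_cap_le (hconv : Convex ℝ S) (hint : (interior S).Nonempty)
    (hν : ChargesOpenSubsets ν (interior S)) {N : EuclideanSpace ℝ (Fin n)}
    (hN : ∀ w, ‖w‖ = 1 → (∀ z ∈ S, ⟪z, w⟫_ℝ ≤ ⟪x, w⟫_ℝ) → w = N)
    {V : Set (EuclideanSpace ℝ (Fin n))} (hV : V ∈ 𝓝 N) :
    ∀ᶠ p in 𝓝 (0 : ℝ≥0∞) ×ˢ 𝓝 x, ∀ v c, ‖v‖ = 1 → ν (S ∩ halfGe v c) ≤ p.1 →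
      c ≤ ⟪p.2, v⟫_ℝ → v ∈ V := by
  by_contra h
  obtain ⟨p, hp, hbad⟩ := frequently_iff_seq_forall.1 (not_eventually.1 h)
  push Not at hbad
  choose v c hv hcap hc hvV using hbad
  obtain ⟨w, hw, φ, hφ, hvw⟩ := (isCompact_sphere 0 1).tendsto_subseq
    fun k => mem_sphere_zero_iff_norm.2 (hv k)
  have hpφ := hp.comp hφ.tendsto_atTop
  have hsupp : ∀ z ∈ interior S, ⟪z, w⟫_ℝ ≤ ⟪x, w⟫_ℝ :=
    inner_le_of_tendsto_measure_cap isOpen_interior hν interior_subset hvw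
      ((tendsto_snd.comp hpφ).inner hvw) (fun k => hc (φ k))
      (tendsto_of_tendsto_of_tendsto_of_le_of_le tendsto_const_nhds (tendsto_fst.comp hpφ)
        (fun _ => zero_le) fun k => hcap (φ k))
  have hclosure : closure (interior S) ⊆ {z | ⟪z, w⟫_ℝ ≤ ⟪x, w⟫_ℝ} :=
    closure_minimal hsupp (isClosed_le (continuous_id.inner continuous_const) continuous_const)
  rw [hconv.closure_interior_eq_closure_of_nonempty_interior hint] at hclosure
  have hwN := hN w (mem_sphere_zero_iff_norm.1 hw) fun z hz => hclosure (subset_closure hz)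
  obtain ⟨k, hk⟩ := (hvw.eventually (hwN ▸ hV)).exists
  exact hvV (φ k) hk

theorem eventually_zero_mem_interior_floatBody (hU : IsOpen U) (hν : ChargesOpenSubsets ν U)
    (hUS : U ⊆ S) (h0 : 0 ∈ U) : ∀ᶠ δ in 𝓝[>] 0, 0 ∈ interior (floatBody ν S δ) := by
  obtain ⟨r, hr, hball⟩ := Metric.isOpen_iff.1 hU 0 h0
  filter_upwards [(tendsto_ofReal_rpow_nhdsGT_zero n).eventually
    (eventually_lt_of_measure_cap_le_of_ball_subset hU hν hUS (half_pos hr).le (half_lt_self hr)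
      hball)] with δ hcap
  refine mem_interior_iff_mem_nhds.2 (Filter.mem_of_superset
    (Metric.closedBall_mem_nhds 0 (half_pos hr)) fun y hy =>
      mem_floatBody_iff.2 fun v c hv hvc => ?_)
  have := real_inner_le_norm y v
  rw [hv, mul_one] at this
  linarith [mem_closedBall_zero_iff.1 hy, hcap v c hv hvc]

theorem eventually_dist_smul_le (hS : IsClosed S) (hSconv : Convex ℝ S) (hU : IsOpen U)
    (hν : ChargesOpenSubsets ν U) (hUS : U ⊆ S) (h0 : 0 ∈ U) (hx : x ∈ frontier S)
    (hxU : x ∈ closure U) {η : ℝ} (hη : 0 < η) :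
    ∀ᶠ δ in 𝓝[>] 0, ∀ t : ℝ, IsGreatest {u : ℝ | 0 ≤ u ∧ u • x ∈ floatBody ν S δ} t →
      dist (t • x) x ≤ η := by
  have h0S : 0 ∈ interior S := interior_maximal hUS hU h0
  have hx0 : 0 < ‖x‖ := norm_pos_iff.2 fun h => hx.2 (h ▸ h0S)
  obtain ⟨r, hr, hball⟩ := Metric.isOpen_iff.1 hU 0 h0
  set q := r / 2
  set d := q * η / ‖x‖
  have hq : 0 < q := half_pos hr
  have hd : 0 < d := by positivity
  filter_upwards [(tendsto_ofReal_rpow_nhdsGT_zero n).eventually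
      (eventually_lt_of_measure_cap_le_of_ball_subset hU hν hUS hq.le (half_lt_self hr) hball),
    (tendsto_ofReal_rpow_nhdsGT_zero n).eventually (eventually_lt_of_measure_cap_le hU hν hUS
      (g := fun v => ⟪x, v⟫_ℝ - d) (by fun_prop)
      fun v hv => exists_mem_inner_gt_of_mem_closure hxU hd hv)] with δ hqc hdc t ht
  have ht₀ : q / (q + d) ≤ t := ht.2 ⟨by positivity, smul_mem_floatBody hq hd hqc hdc⟩
  have ht1 : t ≤ 1 := le_one_of_smul_mem_of_mem_frontier hSconv h0S hx
    (floatBody_subset_s9 hS hSconv ⟨0, hUS h0⟩ ht.1.2)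
  calc dist (t • x) x = (1 - t) * ‖x‖ := by
        rw [dist_eq_norm, show t • x - x = (t - 1) • x by rw [sub_smul, one_smul], norm_smul,
          Real.norm_of_nonpos (by linarith), neg_sub]
    _ ≤ (1 - q / (q + d)) * ‖x‖ := by gcongr
    _ = d / (q + d) * ‖x‖ := by field_simp; ring
    _ ≤ d / q * ‖x‖ := by gcongr; linarith
    _ = η := by simp only [d]; field_simp

end FloatBody

theorem exists_forall_measure_cap_le_restrict {n : ℕ} {K : Set (EuclideanSpace ℝ (Fin n))}
    (hKcomp : IsCompact K) (hKconv : Convex ℝ K) {μ : Measure (EuclideanSpace ℝ (Fin n))}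
    (hμsupp : μ (interior K)ᶜ = 0) {x N : EuclideanSpace ℝ (Fin n)}
    (hNsupp : ∀ y ∈ K, ⟪y, N⟫_ℝ ≤ ⟪x, N⟫_ℝ)
    (hNuniq : ∀ v, ‖v‖ = 1 → (∀ y ∈ K, ⟪y, v⟫_ℝ ≤ ⟪x, v⟫_ℝ) → v = N)
    (hexp : K ∩ {y | ⟪y, N⟫_ℝ = ⟪x, N⟫_ℝ} = {x}) {ε : ℝ} (hε : 0 < ε)
    {K' : Set (EuclideanSpace ℝ (Fin n))} (hK' : K' = K ∩ Metric.closedBall x ε)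
    (hint : (interior K').Nonempty) (hμ : ChargesOpenSubsets μ (interior K')) :
    ∃ β > 0, ∀ᶠ ρ in 𝓝 (0 : ℝ≥0∞), ∀ v c y, ‖v‖ = 1 →
      μ.restrict (interior K') (K' ∩ halfGe v c) ≤ ρ → c ≤ ⟪y, v⟫_ℝ → dist y x ≤ β →
      μ (K ∩ halfGe v c) ≤ μ.restrict (interior K') (K' ∩ halfGe v c) := by
  have hxK : x ∈ K := (hexp.symm ▸ Set.mem_singleton x : x ∈ K ∩ _).1
  have hK'conv : Convex ℝ K' := hK' ▸ hKconv.inter (convex_closedBall x ε)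
  have hμ' := hμ.restrict measurableSet_interior
  have hxcl : x ∈ closure (interior K') :=
    hK'conv.subset_closure_interior hint (hK' ▸ ⟨hxK, Metric.mem_closedBall_self hε.le⟩)
  obtain ⟨V, hV, d, hd, hthin⟩ := hKcomp.exists_forall_dist_lt_of_exposed hNsupp hexp hε
  obtain ⟨P, hP, Q, hQ, hnormal⟩ := eventually_prod_iff.1 <|
    eventually_mem_of_measure_cap_le hK'conv hint hμ'
      (fun w hw h => hNuniq w hw (hKconv.inner_le_of_forall_mem_closedBall hxK hε (hK' ▸ h))) hV
  obtain ⟨β, hβ, hQβ⟩ := Metric.nhds_basis_closedBall.mem_iff.1 hQ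
  refine ⟨β, hβ, ?_⟩
  filter_upwards [hP, eventually_lt_of_measure_cap_le isOpen_interior hμ' interior_subset
    (g := fun v => ⟪x, v⟫_ℝ - d) (by fun_prop)
    fun v hv => exists_mem_inner_gt_of_mem_closure hxcl hd hv] with ρ hρ hdeep v c y hv hcap hcy hyx
  refine measure_inter_le_restrict_interior hμsupp fun z ⟨hzK, hzc⟩ => ?_
  have hvV : v ∈ V := hnormal hρ (hQβ hyx) v c hv hcap hcy
  have hzx := hthin v hvV z (interior_subset hzK) ((hdeep v c hv hcap).le.trans hzc)
  rw [hK', interior_inter]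
  exact ⟨hzK, Metric.ball_subset_interior_closedBall hzx⟩

theorem stmt9_general {n : ℕ} (K : Set (EuclideanSpace ℝ (Fin n)))
    (hKcomp : IsCompact K) (hKconv : Convex ℝ K)
    (μ : Measure (EuclideanSpace ℝ (Fin n)))
    (hμsupp : μ (interior K)ᶜ = 0)
    (hac₂ : volume.restrict (interior K) ≪ μ.restrict (interior K))
    (x N : EuclideanSpace ℝ (Fin n))
    (hx : x ∈ frontier K)
    (hNsupp : ∀ y ∈ K, ⟪y, N⟫_ℝ ≤ ⟪x, N⟫_ℝ)
    (hNuniq : ∀ v : EuclideanSpace ℝ (Fin n), ‖v‖ = 1 →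
      (∀ y ∈ K, ⟪y, v⟫_ℝ ≤ ⟪x, v⟫_ℝ) → v = N)
    (hexp : K ∩ {y | ⟪y, N⟫_ℝ = ⟪x, N⟫_ℝ} = {x})
    (ε : ℝ) (hε : 0 < ε) (K' : Set (EuclideanSpace ℝ (Fin n)))
    (hK' : K' = K ∩ Metric.closedBall x ε)
    (h0K' : 0 ∈ interior K') :
    ∃ δε > (0 : ℝ), ∀ δ ∈ Set.Ioo (0 : ℝ) δε,
      0 ∈ interior (floatBody (μ.restrict (interior K')) K' δ) ∧
      0 ∈ interior (floatBody μ K δ) ∧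
      ∃ p : EuclideanSpace ℝ (Fin n),
        p ∈ frontier (floatBody (μ.restrict (interior K')) K' δ) ∩ ray x ∧
        p ∈ frontier (floatBody μ K δ) ∩ ray x ∧
        (∀ q ∈ frontier (floatBody (μ.restrict (interior K')) K' δ) ∩ ray x, q = p) ∧
        (∀ q ∈ frontier (floatBody μ K δ) ∩ ray x, q = p) := by
  have hK'K : K' ⊆ K := hK' ▸ Set.inter_subset_left
  have hK'conv : Convex ℝ K' := hK' ▸ hKconv.inter (convex_closedBall x ε)
  have hxK' : x ∈ K' :=
    hK' ▸ ⟨hKcomp.isClosed.frontier_subset hx, Metric.mem_closedBall_self hε.le⟩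
  have hμ : ChargesOpenSubsets μ (interior K') :=
    (chargesOpenSubsets_of_absolutelyContinuous volume hac₂ measurableSet_interior).mono
      (interior_mono hK'K)
  obtain ⟨β, hβ, hloc⟩ := exists_forall_measure_cap_le_restrict hKcomp hKconv hμsupp hNsupp
    hNuniq hexp hε hK' ⟨0, h0K'⟩ hμ
  refine mem_nhdsGT_iff_exists_Ioo_subset.1 (eventually_iff.1 ?_)
  filter_upwards [eventually_zero_mem_interior_floatBody isOpen_interior
      (hμ.restrict measurableSet_interior) interior_subset h0K',
    eventually_dist_smul_le hKcomp.isClosed hKconv isOpen_interior hμ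
      (interior_subset.trans hK'K) h0K' hx (hK'conv.subset_closure_interior ⟨0, h0K'⟩ hxK') hβ,
    (tendsto_ofReal_rpow_nhdsGT_zero n).eventually hloc] with δ h0F' hnear hloc
  have hF'F := floatBody_restrict_interior_subset (ν := μ) (δ := δ) hK'K
  have hFK := floatBody_subset_s9 (ν := μ) (δ := δ) hKcomp.isClosed hKconv ⟨x, hK'K hxK'⟩
  obtain ⟨t, ht⟩ := (hKcomp.of_isClosed_subset isClosed_floatBody_s9 hFK).exists_isGreatest_smul_mem
    (hF'F (interior_subset h0F')) fun h0 : x = 0 => hx.2 (h0 ▸ interior_mono hK'K h0K')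
  have htF' := mem_floatBody_of_forall_cap ht.1.2 fun v c hv hcap hc =>
    (hloc v c (t • x) hv hcap hc.le (hnear t ht)).trans hcap
  obtain ⟨hF', hF⟩ := frontier_floatBody_inter_ray_eq hF'F h0F' ht htF'
  rw [hF', hF]
  exact ⟨h0F', interior_mono hF'F h0F', t • x, rfl, rfl, fun _ h => h, fun _ h => h⟩

/-- Approximation of the weighted floating body: near a regular exposed
boundary point, the floating bodies of `K` and of `K' = K ∩ B̄(x,ε)` meet the ray through `x`
in the same point. -/
theorem stmt9 {n : ℕ} (K : Set (EuclideanSpace ℝ (Fin n)))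
    (hKcomp : IsCompact K) (hKconv : Convex ℝ K) (hKint : (interior K).Nonempty)
    (μ : Measure (EuclideanSpace ℝ (Fin n))) [IsFiniteMeasure μ]
    (hμsupp : μ (interior K)ᶜ = 0)
    (hac₁ : μ.restrict (interior K) ≪ volume.restrict (interior K))
    (hac₂ : volume.restrict (interior K) ≪ μ.restrict (interior K))
    (x N : EuclideanSpace ℝ (Fin n))
    (hx : x ∈ frontier K) (hN : ‖N‖ = 1)
    (hNsupp : ∀ y ∈ K, ⟪y, N⟫_ℝ ≤ ⟪x, N⟫_ℝ)
    (hNuniq : ∀ v : EuclideanSpace ℝ (Fin n), ‖v‖ = 1 →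
      (∀ y ∈ K, ⟪y, v⟫_ℝ ≤ ⟪x, v⟫_ℝ) → v = N)
    (hexp : K ∩ {y | ⟪y, N⟫_ℝ = ⟪x, N⟫_ℝ} = {x})
    (ε : ℝ) (hε : 0 < ε) (K' : Set (EuclideanSpace ℝ (Fin n)))
    (hK' : K' = K ∩ Metric.closedBall x ε)
    (h0K' : 0 ∈ interior K') :
    ∃ δε > (0 : ℝ), ∀ δ ∈ Set.Ioo (0 : ℝ) δε,
      0 ∈ interior (floatBody (μ.restrict (interior K')) K' δ) ∧
      0 ∈ interior (floatBody μ K δ) ∧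
      ∃ p : EuclideanSpace ℝ (Fin n),
        p ∈ frontier (floatBody (μ.restrict (interior K')) K' δ) ∩ ray x ∧
        p ∈ frontier (floatBody μ K δ) ∩ ray x ∧
        (∀ q ∈ frontier (floatBody (μ.restrict (interior K')) K' δ) ∩ ray x, q = p) ∧
        (∀ q ∈ frontier (floatBody μ K δ) ∩ ray x, q = p) :=
  stmt9_general K hKcomp hKconv μ hμsupp hac₂ x N hx hNsupp hNuniq hexp ε hε K' hK' h0K'
end
end

section
/- Let p be a point of the open Euclidean unit ball B^n ⊂ ℝ^n, let X_1, …, X_{n-1} ∈ ℝ^n be linearly independent, and let N^e be the unique Euclidean unit vector orthogonal to span(X_1,…,X_{n-1}) with det(X_1,…,X_{n-1},N^e) > 0. Then the vector N^h := √((1 − ‖p‖²)/(1 − (p·N^e)²)) · (N^e − (p·N^e)p) is the unique vector in ℝ^n satisfying: g^h_p(N^h, X_i) = 0 for all i = 1, …, n−1; g^h_p(N^h, N^h) = 1; and det(X_1, …, X_{n-1}, N^h) > 0. -/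
open MeasureTheory Filter
open scoped InnerProductSpace ENNReal Topology

noncomputable section

/-- The hyperbolic (projective model) metric tensor
`g^h_p(X,Y) = ⟪X,Y⟫/(1-‖p‖²) + ⟪X,p⟫⟪Y,p⟫/(1-‖p‖²)²`. -/
def gh {n : ℕ} (p X Y : EuclideanSpace ℝ (Fin n)) : ℝ :=
  ⟪X, Y⟫_ℝ / (1 - ‖p‖ ^ 2) + (⟪X, p⟫_ℝ * ⟪Y, p⟫_ℝ) / (1 - ‖p‖ ^ 2) ^ 2

/-! The map `v ↦ det(X₁, …, X_{n-1}, v)` is a linear functional that vanishes on `span X`, and once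
it is nonzero at some `v`, every `u` lies in `span X + ℝ v` with coefficient the ratio of the two
determinants. So if `v`, `w` are unit vectors `g`-orthogonal to all `X_i`, for a positive definite
form `g`, then `w - t v ∈ span X` for this ratio `t` is `g`-orthogonal to itself, hence zero, and unit
length and positive orientation force `t = 1`.
For existence, `g^h_p(N - ⟪p, N⟫ p, Y) = ⟪N, Y⟫ / (1 - ‖p‖²)`, so `N^h` is `g^h_p`-orthogonal to the
`X_i`, and `det(X, N^h) = ⟪N^e, N^h⟫ det(X, N^e) > 0`. -/

open Module

namespace Module.Basis

variable {K V : Type*} [Field K] [AddCommGroup V] [Module K V] {m : ℕ}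
  (b : Basis (Fin (m + 1)) K V) (X : Fin m → V)

def detSnoc : V →ₗ[K] K :=
  b.det.toMultilinearMap.toLinearMap (Fin.snoc X 0) (Fin.last m)

@[simp]
lemma detSnoc_apply (v : V) : b.detSnoc X v = b.det (Fin.snoc X v) := by
  simp [detSnoc, Fin.update_snoc_last]

lemma detSnoc_eq_zero_of_mem_span {z : V} (hz : z ∈ Submodule.span K (Set.range X)) :
    b.detSnoc X z = 0 := by
  rw [b.detSnoc_apply]
  exact b.det.map_linearDependent _ fun h => (linearIndependent_finSnoc.1 h).2 hz

lemma sub_smul_mem_span_of_detSnoc_ne_zero {v : V} (hv : b.detSnoc X v ≠ 0) (u : V) :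
    u - (b.detSnoc X u / b.detSnoc X v) • v ∈ Submodule.span K (Set.range X) := by
  have hspan := ((b.is_basis_iff_det (v := Fin.snoc X v)).2
    (isUnit_iff_ne_zero.2 (by simpa using hv))).2
  rw [Fin.range_snoc] at hspan
  obtain ⟨a, z, hz, rfl⟩ := Submodule.mem_span_insert.1 (hspan ▸ Submodule.mem_top (x := u))
  have : b.detSnoc X (a • v + z) / b.detSnoc X v = a := by
    rw [map_add, map_smul, b.detSnoc_eq_zero_of_mem_span X hz, smul_eq_mul, add_zero,
      mul_div_cancel_right₀ _ hv]
  rwa [this, add_sub_cancel_left]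

end Module.Basis

theorem eq_of_unit_normal_of_detSnoc_pos {V : Type*} [AddCommGroup V] [Module ℝ V] {m : ℕ}
    (B : LinearMap.BilinForm ℝ V) (hB : ∀ v ≠ 0, 0 < B v v)
    (b : Basis (Fin (m + 1)) ℝ V) (X : Fin m → V) {v w : V}
    (hv : ∀ i, B v (X i) = 0) (hvv : B v v = 1) (hvb : 0 < b.detSnoc X v)
    (hw : ∀ i, B w (X i) = 0) (hww : B w w = 1) (hwb : 0 < b.detSnoc X w) : w = v := by
  set t := b.detSnoc X w / b.detSnoc X v
  have ht : 0 < t := div_pos hwb hvb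
  have hspan := b.sub_smul_mem_span_of_detSnoc_ne_zero X hvb.ne' w
  have hker : Submodule.span ℝ (Set.range X) ≤ LinearMap.ker (B (w - t • v)) :=
    Submodule.span_le.2 <| Set.range_subset_iff.2 fun i => by simp [hv, hw]
  have hwv : w = t • v := by
    by_contra h
    exact (hB _ (sub_ne_zero.2 h)).ne' (hker hspan)
  have ht2 : t ^ 2 = 1 := by
    rw [hwv] at hww
    simpa [hvv, sq] using hww
  rw [hwv, (pow_eq_one_iff_of_nonneg ht.le two_ne_zero).1 ht2, one_smul]

lemma Module.Basis.detSnoc_eq_inner_mul {E : Type*} [NormedAddCommGroup E]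
    [InnerProductSpace ℝ E] {m : ℕ} (b : Basis (Fin (m + 1)) ℝ E) {X : Fin m → E} {N : E} (hN : ‖N‖ = 1)
    (hXN : ∀ i, ⟪N, X i⟫_ℝ = 0) (hb : b.detSnoc X N ≠ 0) (u : E) :
    b.detSnoc X u = ⟪N, u⟫_ℝ * b.detSnoc X N := by
  have hspan : Submodule.span ℝ (Set.range X) ≤ (ℝ ∙ N)ᗮ :=
    Submodule.span_le.2 <| Set.range_subset_iff.2 fun i =>
      Submodule.mem_orthogonal_singleton_iff_inner_right.2 (hXN i)
  have h := Submodule.mem_orthogonal_singleton_iff_inner_right.1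
    (hspan (b.sub_smul_mem_span_of_detSnoc_ne_zero X hb u))
  rw [inner_sub_right, real_inner_smul_right, real_inner_self_eq_norm_sq, hN, sub_eq_zero] at h
  rw [h]
  field_simp

def ghForm {n : ℕ} (p : EuclideanSpace ℝ (Fin n)) :
    LinearMap.BilinForm ℝ (EuclideanSpace ℝ (Fin n)) :=
  LinearMap.mk₂ ℝ (gh p)
    (fun _ _ _ => by simp only [gh, inner_add_left]; ring)
    (fun _ _ _ => by simp only [gh, real_inner_smul_left, smul_eq_mul]; ring)
    (fun _ _ _ => by simp only [gh, inner_add_left, inner_add_right]; ring)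
    (fun _ _ _ => by simp only [gh, real_inner_smul_left, real_inner_smul_right, smul_eq_mul]; ring)

@[simp]
lemma ghForm_apply {n : ℕ} (p v w : EuclideanSpace ℝ (Fin n)) : ghForm p v w = gh p v w := rfl

lemma gh_self_pos {n : ℕ} {p v : EuclideanSpace ℝ (Fin n)} (hp : ‖p‖ < 1) (hv : v ≠ 0) :
    0 < gh p v v := by
  have hs : 0 < 1 - ‖p‖ ^ 2 := by nlinarith [norm_nonneg p]
  rw [gh, real_inner_self_eq_norm_sq]
  exact add_pos_of_pos_of_nonneg (div_pos (pow_pos (norm_pos_iff.2 hv) 2) hs)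
    (div_nonneg (mul_self_nonneg _) (sq_nonneg _))

lemma gh_sub_inner_smul_left {n : ℕ} (p N Y : EuclideanSpace ℝ (Fin n)) :
    gh p (N - ⟪p, N⟫_ℝ • p) Y = ⟪N, Y⟫_ℝ / (1 - ‖p‖ ^ 2) := by
  rcases eq_or_ne (1 - ‖p‖ ^ 2) 0 with hs | hs
  · simp [gh, hs]
  simp only [gh, inner_sub_left, real_inner_smul_left, real_inner_self_eq_norm_sq,
    real_inner_comm p Y, real_inner_comm p N]
  field_simp
  ring

lemma matrix_det_snoc_eq_detSnoc {m : ℕ} (X : Fin m → EuclideanSpace ℝ (Fin (m + 1)))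
    (v : EuclideanSpace ℝ (Fin (m + 1))) :
    (Matrix.of fun i j =>
      (Fin.snoc X v : Fin (m + 1) → EuclideanSpace ℝ (Fin (m + 1))) i j).det =
    (EuclideanSpace.basisFun (Fin (m + 1)) ℝ).toBasis.detSnoc X v := by
  rw [Basis.detSnoc_apply, Basis.det_apply, ← Matrix.det_transpose]
  congr 1

theorem stmt10_general {m : ℕ} (p : EuclideanSpace ℝ (Fin (m + 1))) (hp : ‖p‖ < 1)
    (X : Fin m → EuclideanSpace ℝ (Fin (m + 1)))
    (Ne : EuclideanSpace ℝ (Fin (m + 1))) (hNe : ‖Ne‖ = 1)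
    (horth : ∀ i, ⟪X i, Ne⟫_ℝ = 0)
    (hdet : 0 < (Matrix.of fun i j =>
      (Fin.snoc X Ne : Fin (m + 1) → EuclideanSpace ℝ (Fin (m + 1))) i j).det)
    (Nh : EuclideanSpace ℝ (Fin (m + 1)))
    (hNh : Nh = Real.sqrt ((1 - ‖p‖ ^ 2) / (1 - ⟪p, Ne⟫_ℝ ^ 2)) • (Ne - ⟪p, Ne⟫_ℝ • p)) :
    (∀ i, gh p Nh (X i) = 0) ∧ gh p Nh Nh = 1 ∧
    0 < (Matrix.of fun i j =>
      (Fin.snoc X Nh : Fin (m + 1) → EuclideanSpace ℝ (Fin (m + 1))) i j).det ∧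
    ∀ v : EuclideanSpace ℝ (Fin (m + 1)),
      (∀ i, gh p v (X i) = 0) → gh p v v = 1 →
      0 < (Matrix.of fun i j =>
        (Fin.snoc X v : Fin (m + 1) → EuclideanSpace ℝ (Fin (m + 1))) i j).det →
      v = Nh := by
  simp only [matrix_det_snoc_eq_detSnoc] at hdet ⊢
  set b := (EuclideanSpace.basisFun (Fin (m + 1)) ℝ).toBasis
  set a := ⟪p, Ne⟫_ℝ
  set c := Real.sqrt ((1 - ‖p‖ ^ 2) / (1 - a ^ 2))
  have hs : 0 < 1 - ‖p‖ ^ 2 := by nlinarith [norm_nonneg p]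
  have ha : 0 < 1 - a ^ 2 := by
    have := abs_real_inner_le_norm p Ne
    rw [hNe, mul_one] at this
    nlinarith [sq_abs a, abs_nonneg a]
  have hc : 0 < c := Real.sqrt_pos.2 (div_pos hs ha)
  have hc2 : c ^ 2 = (1 - ‖p‖ ^ 2) / (1 - a ^ 2) := Real.sq_sqrt (div_pos hs ha).le
  have hNeX i : ⟪Ne, X i⟫_ℝ = 0 := by rw [real_inner_comm]; exact horth i
  have hgh Y : gh p Nh Y = c * ⟪Ne, Y⟫_ℝ / (1 - ‖p‖ ^ 2) := by
    rw [hNh, ← ghForm_apply, map_smul, LinearMap.smul_apply, ghForm_apply,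
      gh_sub_inner_smul_left, smul_eq_mul, mul_div_assoc]
  have hNeNh : ⟪Ne, Nh⟫_ℝ = c * (1 - a ^ 2) := by
    rw [hNh, real_inner_smul_right, inner_sub_right, real_inner_smul_right,
      real_inner_self_eq_norm_sq, hNe, real_inner_comm]
    ring
  have hNhX i : gh p Nh (X i) = 0 := by rw [hgh, hNeX, mul_zero, zero_div]
  have hNhNh : gh p Nh Nh = 1 := by
    rw [hgh, hNeNh, ← mul_assoc, ← sq, hc2]
    field_simp
  have hdetNh : 0 < b.detSnoc X Nh := by
    rw [b.detSnoc_eq_inner_mul hNe hNeX hdet.ne', hNeNh]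
    positivity
  exact ⟨hNhX, hNhNh, hdetNh, fun v hv hvv hvdet =>
    eq_of_unit_normal_of_detSnoc_pos (ghForm p) (fun _ => gh_self_pos hp) b X hNhX hNhNh hdetNh
      hv hvv hvdet⟩

/-- Formula for the hyperbolic unit normal in the projective model. -/
theorem stmt10 {m : ℕ} (p : EuclideanSpace ℝ (Fin (m + 1))) (hp : ‖p‖ < 1)
    (X : Fin m → EuclideanSpace ℝ (Fin (m + 1))) (hX : LinearIndependent ℝ X)
    (Ne : EuclideanSpace ℝ (Fin (m + 1))) (hNe : ‖Ne‖ = 1)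
    (horth : ∀ i, ⟪X i, Ne⟫_ℝ = 0)
    (hdet : 0 < (Matrix.of fun i j =>
      (Fin.snoc X Ne : Fin (m + 1) → EuclideanSpace ℝ (Fin (m + 1))) i j).det)
    (Nh : EuclideanSpace ℝ (Fin (m + 1)))
    (hNh : Nh = Real.sqrt ((1 - ‖p‖ ^ 2) / (1 - ⟪p, Ne⟫_ℝ ^ 2)) • (Ne - ⟪p, Ne⟫_ℝ • p)) :
    (∀ i, gh p Nh (X i) = 0) ∧ gh p Nh Nh = 1 ∧
    0 < (Matrix.of fun i j =>
      (Fin.snoc X Nh : Fin (m + 1) → EuclideanSpace ℝ (Fin (m + 1))) i j).det ∧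
    ∀ v : EuclideanSpace ℝ (Fin (m + 1)),
      (∀ i, gh p v (X i) = 0) → gh p v v = 1 →
      0 < (Matrix.of fun i j =>
        (Fin.snoc X v : Fin (m + 1) → EuclideanSpace ℝ (Fin (m + 1))) i j).det →
      v = Nh :=
  stmt10_general p hp X Ne hNe horth hdet Nh hNh
end
end
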